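/- arXiv:1803.07194 — 7 statements merged into one kernel-verified Lean document; each statement's English description precedes it below -/
import Mathlib

section
/- Kernel and nonnegativity of T^α_{2,k}: Let N ≥ 3 be an integer, α ≠ 0 and k ∈ {1,…,⌊(N−1)/2⌋}. Then: (a) ⟨T^α_{2,k}V, V⟩_{L²(G)} ≥ 0 for every V ∈ dom(T^α_{2,k}); and (b) the kernel of T^α_{2,k} is exactly the one-dimensional span of Φ_k^α, i.e., Φ_k^α ∈ dom(T^α_{2,k}) with T^α_{2,k}Φ_k^α = 0, and every V ∈ dom(T^α_{2,k}) with T^α_{2,k}V = 0 is a scalar multiple of Φ_k^α. -/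
open MeasureTheory Set Filter

noncomputable section

def mu : Measure ℝ := volume.restrict (Set.Ioi (0:ℝ))

def MemL2 (f : ℝ → ℂ) : Prop := MeasureTheory.MemLp f 2 mu

def MemH1 (f : ℝ → ℂ) : Prop :=
  ContinuousOn f (Set.Ici (0:ℝ)) ∧ (∀ x ∈ Set.Ioi (0:ℝ), DifferentiableAt ℝ f x) ∧
    MemL2 f ∧ MemL2 (deriv f)

def MemH2 (f : ℝ → ℂ) : Prop :=
  MemH1 f ∧ ContinuousOn (deriv f) (Set.Ici (0:ℝ)) ∧
    (∀ x ∈ Set.Ioi (0:ℝ), DifferentiableAt ℝ (deriv f) x) ∧ MemL2 (deriv (deriv f))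

def MemW1 (f : ℝ → ℂ) : Prop := MemH1 f ∧ MemL2 (fun x => (x : ℂ) * f x)

def MemW2 (f : ℝ → ℂ) : Prop := MemH2 f ∧ MemL2 (fun x => ((x : ℂ))^2 * f x)

def domDelta (N : ℕ) (α : ℝ) (V : Fin N → ℝ → ℂ) : Prop :=
  (∀ j, MemW2 (V j)) ∧ (∀ j j', V j 0 = V j' 0) ∧
    (∀ j₀, (∑ j, deriv (V j) 0) = (α : ℂ) * V j₀ 0)

def pot (N k : ℕ) (α c : ℝ) (j : Fin N) (x : ℝ) : ℝ :=
  if (j : ℕ) < k then (x - α/(2*(k:ℝ) - (N:ℝ)))^2 - c else (x + α/(2*(k:ℝ) - (N:ℝ)))^2 - c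

def Tlin (N k : ℕ) (α c : ℝ) (V : Fin N → ℝ → ℂ) (j : Fin N) (x : ℝ) : ℂ :=
  -(deriv (deriv (V j)) x) + (pot N k α c j x : ℂ) * V j x

def qf (N k : ℕ) (α c : ℝ) (V : Fin N → ℝ → ℂ) : ℝ :=
  (∑ j, ∫ x in Set.Ioi (0:ℝ), Tlin N k α c V j x * (starRingEnd ℂ) (V j x)).re

def memL2k (N k : ℕ) (V : Fin N → ℝ → ℂ) : Prop :=
  ∀ j j' : Fin N, (((j:ℕ) < k ∧ (j':ℕ) < k) ∨ (k ≤ (j:ℕ) ∧ k ≤ (j':ℕ))) → V j =ᵐ[mu] V j'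

def phiProf (N k : ℕ) (α ω : ℝ) (j : Fin N) (x : ℝ) : ℝ :=
  if (j : ℕ) < k then Real.exp ((ω+1)/2) * Real.exp (-(x - α/(2*(k:ℝ) - (N:ℝ)))^2/2)
  else Real.exp ((ω+1)/2) * Real.exp (-(x + α/(2*(k:ℝ) - (N:ℝ)))^2/2)

/-!
On the edge `j` the potential is `(x + s_j)^2 - 1` with `s_j = ∓ a_k`, and
`-d² + (x + s)² - 1 = A_s^* A_s` for `A_s = d/dx + (x + s)`. Integrating by parts on each half-line,
`⟨T V, V⟩ = ∑ ‖A_{s_j} v_j‖² + Re (∑ (v_j'(0) + s_j v_j(0)) · conj v(0))`, and the boundary term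
vanishes because `∑ v_j'(0) = α v(0)` while `∑ s_j = (N - 2k) a_k = -α`. Hence `T ≥ 0`, and
`T V = 0` forces `A_{s_j} v_j = 0`, i.e. `v_j = c_j e^{-(x + s_j)²/2}`; continuity at the vertex,
with `s_j² = a_k²` for all `j`, makes the `c_j` equal.
-/

lemma MemL2.integrable_mul {f g : ℝ → ℂ} (hf : MemL2 f) (hg : MemL2 g) :
    Integrable (fun x => f x * g x) mu :=
  MemLp.integrable_mul hf hg

lemma MemL2.conj {f : ℝ → ℂ} (hf : MemL2 f) : MemL2 (fun x => (starRingEnd ℂ) (f x)) :=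
  MemLp.star hf

lemma MemL2.ofReal_mul {f : ℝ → ℂ} (hf : MemL2 f) (hf2 : MemL2 (fun x => (x : ℂ) ^ 2 * f x)) :
    MemL2 (fun x => (x : ℂ) * f x) := by
  refine (hf.norm.add hf2.norm).of_le
    ((Complex.continuous_ofReal.aestronglyMeasurable).mul hf.1) (Eventually.of_forall fun x => ?_)
  simp only [norm_mul, norm_pow, Real.norm_eq_abs, Pi.add_apply]
  rw [abs_of_nonneg (by positivity)]
  nlinarith [sq_nonneg (‖(x : ℂ)‖ - 1), norm_nonneg (f x)]

lemma memL2_pow_mul_gaussian (n : ℕ) (s : ℝ) :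
    MemL2 (fun x => (((x + s) ^ n * Real.exp (-(x + s) ^ 2 / 2) : ℝ) : ℂ)) := by
  have hcont : Continuous fun y : ℝ => y ^ n * Real.exp (-y ^ 2 / 2) := by fun_prop
  have hR : MemLp (fun y : ℝ => y ^ n * Real.exp (-y ^ 2 / 2)) 2 := by
    rw [memLp_two_iff_integrable_sq hcont.aestronglyMeasurable]
    have h := integrable_rpow_mul_exp_neg_mul_sq one_pos (s := ((2 * n : ℕ) : ℝ))
      (by have := (2 * n : ℕ).cast_nonneg (α := ℝ); linarith)
    refine h.congr (Eventually.of_forall fun y => ?_)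
    simp only
    rw [Real.rpow_natCast, mul_pow, ← pow_mul, ← Real.exp_nat_mul]
    ring_nf
  exact ((hR.comp_measurePreserving (measurePreserving_add_right volume s)).restrict _).ofReal

lemma hasDerivAt_gaussian (c s x : ℝ) :
    HasDerivAt (fun y => c * Real.exp (-(y + s) ^ 2 / 2))
      (-(x + s) * (c * Real.exp (-(x + s) ^ 2 / 2))) x := by
  have h : HasDerivAt (fun y => -(y + s) ^ 2 / 2) (-(x + s)) x := by
    refine ((((hasDerivAt_id x).add_const s).pow 2).neg.div_const 2).congr_deriv ?_
    norm_num; ring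
  exact (h.exp.const_mul c).congr_deriv (by ring)

lemma hasDerivAt_neg_mul_gaussian (c s x : ℝ) :
    HasDerivAt (fun y => -(y + s) * (c * Real.exp (-(y + s) ^ 2 / 2)))
      (((x + s) ^ 2 - 1) * (c * Real.exp (-(x + s) ^ 2 / 2))) x :=
  (((hasDerivAt_id x).add_const s).neg.mul (hasDerivAt_gaussian c s x)).congr_deriv (by
    simp only [id_eq, Pi.neg_apply]; ring)

lemma deriv_gaussian (c s : ℝ) :
    deriv (fun x => ((c * Real.exp (-(x + s) ^ 2 / 2) : ℝ) : ℂ))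
      = fun x => ((-(x + s) * (c * Real.exp (-(x + s) ^ 2 / 2)) : ℝ) : ℂ) :=
  funext fun x => (hasDerivAt_gaussian c s x).ofReal_comp.deriv

lemma hasDerivAt_deriv_gaussian (c s x : ℝ) :
    HasDerivAt (deriv (fun x => ((c * Real.exp (-(x + s) ^ 2 / 2) : ℝ) : ℂ)))
      ((((x + s) ^ 2 - 1) * (c * Real.exp (-(x + s) ^ 2 / 2)) : ℝ) : ℂ) x := by
  rw [deriv_gaussian]
  exact (hasDerivAt_neg_mul_gaussian c s x).ofReal_comp

lemma memW2_gaussian (c s : ℝ) : MemW2 (fun x => ((c * Real.exp (-(x + s) ^ 2 / 2) : ℝ) : ℂ)) := by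
  set g : ℕ → ℝ → ℂ := fun n x => (((x + s) ^ n * Real.exp (-(x + s) ^ 2 / 2) : ℝ) : ℂ)
  have hg : ∀ n, MemL2 (g n) := fun n => memL2_pow_mul_gaussian n s
  have hd : ∀ x, HasDerivAt (fun x => ((c * Real.exp (-(x + s) ^ 2 / 2) : ℝ) : ℂ))
      ((-(x + s) * (c * Real.exp (-(x + s) ^ 2 / 2)) : ℝ) : ℂ) x :=
    fun x => (hasDerivAt_gaussian c s x).ofReal_comp
  refine ⟨⟨⟨?_, fun x _ => (hd x).differentiableAt, ?_, ?_⟩, ?_,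
    fun x _ => (hasDerivAt_deriv_gaussian c s x).differentiableAt, ?_⟩, ?_⟩
  · exact (continuous_iff_continuousAt.2 fun x => (hd x).continuousAt).continuousOn
  · unfold MemL2
    convert (hg 0).const_mul (c : ℂ) using 1
    ext x; simp only [g]; push_cast; ring
  · rw [deriv_gaussian]
    unfold MemL2
    convert (hg 1).const_mul (-c : ℂ) using 1
    ext x; simp only [g]; push_cast; ring
  · exact (continuous_iff_continuousAt.2
      fun x => (hasDerivAt_deriv_gaussian c s x).continuousAt).continuousOn
  · unfold MemL2
    convert ((hg 2).const_mul (c : ℂ)).sub ((hg 0).const_mul (c : ℂ)) using 1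
    ext x
    rw [(hasDerivAt_deriv_gaussian c s x).deriv]
    simp only [g, Pi.sub_apply]; push_cast; ring
  · unfold MemL2
    convert (((hg 2).const_mul (c : ℂ)).sub ((hg 1).const_mul (2 * s * c : ℂ))).add
      ((hg 0).const_mul (s ^ 2 * c : ℂ)) using 1
    ext x; simp only [g, Pi.add_apply, Pi.sub_apply]; push_cast; ring

lemma eq_of_hasDerivAt_zero_Ioi {E : Type*} [NormedAddCommGroup E] [NormedSpace ℝ E]
    {f : ℝ → E} {a : ℝ} (hc : ContinuousOn f (Ici a)) (hd : ∀ x ∈ Ioi a, HasDerivAt f 0 x) :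
    ∀ x ∈ Ici a, f x = f a := by
  have hb : a + 1 ∈ Ioi a := by simp
  have hconst : EqOn f (fun _ => f (a + 1)) (Ioi a) := fun x hx =>
    isOpen_Ioi.is_const_of_deriv_eq_zero isPreconnected_Ioi
      (fun y hy => (hd y hy).differentiableAt.differentiableWithinAt)
      (fun y hy => (hd y hy).deriv) hx hb
  have hext := hconst.of_subset_closure hc continuousOn_const Ioi_subset_Ici_self
    (by rw [closure_Ioi])
  intro x hx
  rw [hext hx, hext self_mem_Ici]

def annihilation (s : ℝ) (v : ℝ → ℂ) (x : ℝ) : ℂ := deriv v x + ((x + s : ℝ) : ℂ) * v x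

def harmonicOp (s : ℝ) (v : ℝ → ℂ) (x : ℝ) : ℂ :=
  -deriv (deriv v) x + (((x + s) ^ 2 - 1 : ℝ) : ℂ) * v x

section HalfLine
variable {v : ℝ → ℂ}

lemma MemW2.memL2_annihilation (hv : MemW2 v) (s : ℝ) : MemL2 (annihilation s v) := by
  have hx := hv.1.1.2.2.1.ofReal_mul hv.2
  unfold MemL2
  convert hv.1.1.2.2.2.add (hx.add (hv.1.1.2.2.1.const_mul (s : ℂ))) using 1
  ext x; simp only [annihilation, Pi.add_apply]; push_cast; ring

lemma MemW2.memL2_harmonicOp (hv : MemW2 v) (s : ℝ) : MemL2 (harmonicOp s v) := by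
  have hx := hv.1.1.2.2.1.ofReal_mul hv.2
  unfold MemL2
  convert hv.1.2.2.2.neg.add ((hv.2.add (hx.const_mul (2 * s : ℂ))).add
    (hv.1.1.2.2.1.const_mul (s ^ 2 - 1 : ℂ))) using 1
  ext x; simp only [harmonicOp, Pi.add_apply, Pi.neg_apply]; push_cast; ring

/-- `harmonicOp s` factors as `(-d/dx + (x + s)) ∘ annihilation s`. -/
lemma hasDerivAt_annihilation_mul_conj {s x : ℝ} (hv : DifferentiableAt ℝ v x)
    (hv' : DifferentiableAt ℝ (deriv v) x) :
    HasDerivAt (fun y => annihilation s v y * starRingEnd ℂ (v y))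
      (((‖annihilation s v x‖ ^ 2 : ℝ) : ℂ) - harmonicOp s v x * starRingEnd ℂ (v x)) x := by
  have hshift : HasDerivAt (fun y : ℝ => ((y + s : ℝ) : ℂ)) 1 x := by
    simpa using ((hasDerivAt_id x).add_const s).ofReal_comp
  have hconj : HasDerivAt (fun y => starRingEnd ℂ (v y)) (starRingEnd ℂ (deriv v x)) x :=
    hv.hasDerivAt.star
  refine ((hv'.hasDerivAt.add (hshift.mul hv.hasDerivAt)).mul hconj).congr_deriv ?_
  rw [Complex.ofReal_pow, ← Complex.mul_conj']
  simp only [annihilation, harmonicOp, Pi.add_apply, Pi.mul_apply, map_add, map_mul,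
    Complex.conj_ofReal]
  push_cast
  ring

lemma MemW2.continuousOn_annihilation (hv : MemW2 v) (s : ℝ) :
    ContinuousOn (annihilation s v) (Ici 0) :=
  hv.1.2.1.add ((by fun_prop : Continuous fun y : ℝ => ((y + s : ℝ) : ℂ)).continuousOn.mul hv.1.1.1)

lemma MemW2.integral_harmonicOp_mul_conj (hv : MemW2 v) (s : ℝ) :
    ∫ x in Ioi 0, harmonicOp s v x * starRingEnd ℂ (v x)
      = ((∫ x in Ioi 0, ‖annihilation s v x‖ ^ 2 : ℝ) : ℂ)
        + annihilation s v 0 * starRingEnd ℂ (v 0) := by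
  obtain ⟨⟨⟨hc, hd, hL2, -⟩, -, hd', -⟩, -⟩ := id hv
  have hA := hv.memL2_annihilation s
  have hsq : IntegrableOn (fun x => ((‖annihilation s v x‖ ^ 2 : ℝ) : ℂ)) (Ioi 0) :=
    ((memLp_two_iff_integrable_sq_norm hA.1).1 hA).ofReal
  have hT : IntegrableOn (fun x => harmonicOp s v x * starRingEnd ℂ (v x)) (Ioi 0) :=
    (hv.memL2_harmonicOp s).integrable_mul hL2.conj
  have hF : IntegrableOn (fun x => annihilation s v x * starRingEnd ℂ (v x)) (Ioi 0) :=
    hA.integrable_mul hL2.conj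
  have hF' : IntegrableOn (fun x => ((‖annihilation s v x‖ ^ 2 : ℝ) : ℂ)
      - harmonicOp s v x * starRingEnd ℂ (v x)) (Ioi 0) :=
    hsq.sub hT
  have hderiv : ∀ x ∈ Ioi (0 : ℝ), HasDerivAt (fun y => annihilation s v y * starRingEnd ℂ (v y))
      (((‖annihilation s v x‖ ^ 2 : ℝ) : ℂ) - harmonicOp s v x * starRingEnd ℂ (v x)) x :=
    fun x hx => hasDerivAt_annihilation_mul_conj (hd x hx) (hd' x hx)
  have hcont : ContinuousWithinAt (fun y => annihilation s v y * starRingEnd ℂ (v y)) (Ici 0) 0 :=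
    ((hv.continuousOn_annihilation s).mul (Complex.continuous_conj.comp_continuousOn hc)) 0
      self_mem_Ici
  have hIBP := integral_Ioi_of_hasDerivAt_of_tendsto hcont hderiv hF'
    (tendsto_zero_of_hasDerivAt_of_integrableOn_Ioi hderiv hF' hF)
  rw [integral_sub hsq hT, integral_complex_ofReal] at hIBP
  linear_combination -hIBP

lemma MemW2.eqOn_annihilation_zero_of_integral_eq_zero (hv : MemW2 v) {s : ℝ}
    (h : ∫ x in Ioi 0, ‖annihilation s v x‖ ^ 2 = 0) : EqOn (annihilation s v) 0 (Ioi 0) := by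
  have hA := hv.memL2_annihilation s
  have hsq : IntegrableOn (fun x => ‖annihilation s v x‖ ^ 2) (Ioi 0) :=
    (memLp_two_iff_integrable_sq_norm hA.1).1 hA
  have hae := (integral_eq_zero_iff_of_nonneg (fun x => by positivity) hsq).1 h
  refine Measure.eqOn_open_of_ae_eq (hae.mono fun x hx => ?_) isOpen_Ioi
    ((hv.continuousOn_annihilation s).mono Ioi_subset_Ici_self) continuousOn_const
  simpa using hx

lemma harmonicOp_gaussian (c s x : ℝ) :
    harmonicOp s (fun x => ((c * Real.exp (-(x + s) ^ 2 / 2) : ℝ) : ℂ)) x = 0 := by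
  rw [harmonicOp, (hasDerivAt_deriv_gaussian c s x).deriv]
  push_cast
  ring

lemma eq_gaussian_of_annihilation_eq_zero {s : ℝ} (hc : ContinuousOn v (Ici 0))
    (hd : ∀ x ∈ Ioi 0, DifferentiableAt ℝ v x) (hA : EqOn (annihilation s v) 0 (Ioi 0)) :
    ∀ x ∈ Ici 0, v x = v 0 * Real.exp (s ^ 2 / 2) * Real.exp (-(x + s) ^ 2 / 2) := by
  have hw : ∀ x ∈ Ioi (0 : ℝ),
      HasDerivAt (fun y => (Real.exp ((y + s) ^ 2 / 2) : ℂ) * v y) 0 x := by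
    intro x hx
    have he : HasDerivAt (fun y => (Real.exp ((y + s) ^ 2 / 2) : ℂ))
        (((x + s) * Real.exp ((x + s) ^ 2 / 2) : ℝ) : ℂ) x := by
      refine (((((hasDerivAt_id x).add_const s).pow 2).div_const 2).exp.congr_deriv ?_).ofReal_comp
      norm_num; ring
    refine (he.mul (hd x hx).hasDerivAt).congr_deriv ?_
    have h0 : annihilation s v x = 0 := hA hx
    rw [annihilation] at h0
    rw [Complex.ofReal_mul]
    linear_combination (Real.exp ((x + s) ^ 2 / 2) : ℂ) * h0
  have hwc : ContinuousOn (fun y => (Real.exp ((y + s) ^ 2 / 2) : ℂ) * v y) (Ici 0) :=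
    (by fun_prop : Continuous fun y : ℝ => (Real.exp ((y + s) ^ 2 / 2) : ℂ)).continuousOn.mul hc
  intro x hx
  have key := eq_of_hasDerivAt_zero_Ioi hwc hw x hx
  have hexp : (Real.exp (-(x + s) ^ 2 / 2) : ℂ) * Real.exp ((x + s) ^ 2 / 2) = 1 := by
    rw [← Complex.ofReal_mul, ← Real.exp_add, neg_div, neg_add_cancel, Real.exp_zero,
      Complex.ofReal_one]
  simp only [zero_add] at key
  linear_combination (Real.exp (-(x + s) ^ 2 / 2) : ℂ) * key - v x * hexp

end HalfLine

def edgeShift (N k : ℕ) (α : ℝ) (j : Fin N) : ℝ :=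
  if (j : ℕ) < k then -(α / (2 * k - N)) else α / (2 * k - N)

section Graph
variable {N k : ℕ} {α : ℝ}

lemma pot_eq_edgeShift (c : ℝ) (j : Fin N) (x : ℝ) :
    pot N k α c j x = (x + edgeShift N k α j) ^ 2 - c := by
  unfold pot edgeShift
  split_ifs <;> ring

lemma Tlin_one_eq_harmonicOp (V : Fin N → ℝ → ℂ) (j : Fin N) (x : ℝ) :
    Tlin N k α 1 V j x = harmonicOp (edgeShift N k α j) (V j) x := by
  rw [Tlin, harmonicOp, pot_eq_edgeShift]

lemma edgeShift_sq (j : Fin N) : edgeShift N k α j ^ 2 = (α / (2 * k - N)) ^ 2 := by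
  unfold edgeShift
  split_ifs <;> ring

lemma sum_edgeShift (hk : 2 * k < N) : ∑ j, edgeShift N k α j = -α := by
  have hden : (2 * k - N : ℝ) ≠ 0 := by
    have : ((2 * k : ℕ) : ℝ) < N := by exact_mod_cast hk
    push_cast at this
    linarith
  unfold edgeShift
  rw [Fin.sum_univ_eq_sum_range (fun i => if i < k then -(α / (2 * k - N)) else α / (2 * k - N)),
    ← Finset.sum_range_add_sum_Ico _ (by omega : k ≤ N),
    Finset.sum_congr rfl fun i hi => if_pos (Finset.mem_range.1 hi),
    Finset.sum_congr rfl fun i hi => if_neg (not_lt.2 (Finset.mem_Ico.1 hi).1)]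
  simp only [Finset.sum_const, Finset.card_range, Nat.card_Ico, nsmul_eq_mul,
    Nat.cast_sub (by omega : k ≤ N)]
  linear_combination (-α) * mul_inv_cancel₀ hden

lemma phiProf_eq (ω : ℝ) (j : Fin N) (x : ℝ) :
    phiProf N k α ω j x
      = Real.exp ((ω + 1) / 2) * Real.exp (-(x + edgeShift N k α j) ^ 2 / 2) := by
  unfold phiProf edgeShift
  split_ifs <;> ring_nf

lemma sum_annihilation_mul_conj_eq_zero {V : Fin N → ℝ → ℂ} {s : Fin N → ℝ}
    (hV : domDelta N α V) (hs : ∑ j, s j = -α) :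
    ∑ j, annihilation (s j) (V j) 0 * starRingEnd ℂ (V j 0) = 0 := by
  rcases isEmpty_or_nonempty (Fin N) with hN | ⟨⟨j₀⟩⟩
  · simp
  have hv : ∀ j, V j 0 = V j₀ 0 := fun j => hV.2.1 j j₀
  calc ∑ j, annihilation (s j) (V j) 0 * starRingEnd ℂ (V j 0)
      = (∑ j, deriv (V j) 0 + ((∑ j, s j : ℝ) : ℂ) * V j₀ 0) * starRingEnd ℂ (V j₀ 0) := by
        simp only [annihilation, hv, zero_add]
        rw [← Finset.sum_mul, Finset.sum_add_distrib, ← Finset.sum_mul, Complex.ofReal_sum]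
    _ = 0 := by
        rw [hV.2.2 j₀, hs]
        push_cast
        ring

lemma qf_eq_sum_integral_norm_sq (hk : 2 * k < N) {V : Fin N → ℝ → ℂ} (hV : domDelta N α V) :
    qf N k α 1 V = ∑ j, ∫ x in Ioi 0, ‖annihilation (edgeShift N k α j) (V j) x‖ ^ 2 := by
  simp only [qf, Tlin_one_eq_harmonicOp, fun j => (hV.1 j).integral_harmonicOp_mul_conj,
    Finset.sum_add_distrib, sum_annihilation_mul_conj_eq_zero hV (sum_edgeShift hk), add_zero]
  rw [← Complex.ofReal_sum, Complex.ofReal_re]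

lemma domDelta_phiProf (hk : 2 * k < N) (ω : ℝ) :
    domDelta N α (fun j x => (phiProf N k α ω j x : ℂ)) := by
  refine ⟨fun j => ?_, fun j j' => ?_, fun j₀ => ?_⟩
  · simp only [phiProf_eq]
    exact memW2_gaussian _ _
  · simp only [phiProf_eq, zero_add, edgeShift_sq]
  · simp only [phiProf_eq, deriv_gaussian, zero_add, edgeShift_sq]
    rw [← Complex.ofReal_sum, ← Finset.sum_mul, Finset.sum_neg_distrib, sum_edgeShift hk, neg_neg]
    push_cast
    ring

lemma Tlin_phiProf_eq_zero (ω : ℝ) (j : Fin N) (x : ℝ) :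
    Tlin N k α 1 (fun j x => (phiProf N k α ω j x : ℂ)) j x = 0 := by
  simp only [Tlin_one_eq_harmonicOp, phiProf_eq, harmonicOp_gaussian]

lemma eq_mul_phiProf_of_Tlin_eq_zero (hk : 2 * k < N) (ω : ℝ) {V : Fin N → ℝ → ℂ}
    (hV : domDelta N α V) (hT : ∀ j, ∀ x ∈ Ioi (0 : ℝ), Tlin N k α 1 V j x = 0) :
    ∃ c : ℂ, ∀ j, ∀ x ∈ Ioi (0 : ℝ), V j x = c * (phiProf N k α ω j x : ℂ) := by
  have hq : qf N k α 1 V = 0 := by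
    rw [qf, Finset.sum_eq_zero fun j _ =>
      setIntegral_eq_zero_of_forall_eq_zero fun x hx => by rw [hT j x hx, zero_mul]]
    simp
  rw [qf_eq_sum_integral_norm_sq hk hV, Finset.sum_eq_zero_iff_of_nonneg
    fun j _ => setIntegral_nonneg measurableSet_Ioi fun x _ => by positivity] at hq
  have hgauss : ∀ j, ∀ x ∈ Ioi (0 : ℝ), V j x = V j 0 * Real.exp ((α / (2 * k - N)) ^ 2 / 2)
      * Real.exp (-(x + edgeShift N k α j) ^ 2 / 2) := fun j x hx => by
    rw [eq_gaussian_of_annihilation_eq_zero (hV.1 j).1.1.1 (hV.1 j).1.1.2.1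
      ((hV.1 j).eqOn_annihilation_zero_of_integral_eq_zero (hq j (Finset.mem_univ j))) x
      (Ioi_subset_Ici_self hx), edgeShift_sq]
  obtain ⟨j₀⟩ : Nonempty (Fin N) := ⟨⟨0, by omega⟩⟩
  refine ⟨V j₀ 0 * Real.exp ((α / (2 * k - N)) ^ 2 / 2) / Real.exp ((ω + 1) / 2),
    fun j x hx => ?_⟩
  rw [phiProf_eq, hgauss j x hx, hV.2.1 j j₀]
  push_cast
  field_simp

end Graph

theorem T2_nonneg_and_kernel_general
    (N k : ℕ) (hN : 3 ≤ N) (α ω : ℝ) (hk2 : k ≤ (N - 1) / 2) :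
    (∀ V : Fin N → ℝ → ℂ, domDelta N α V → 0 ≤ qf N k α 1 V) ∧
    (domDelta N α (fun j x => (phiProf N k α ω j x : ℂ)) ∧
      (∀ j : Fin N, ∀ x ∈ Set.Ioi (0:ℝ),
        Tlin N k α 1 (fun j x => (phiProf N k α ω j x : ℂ)) j x = 0)) ∧
    (∀ V : Fin N → ℝ → ℂ, domDelta N α V →
      (∀ j : Fin N, ∀ x ∈ Set.Ioi (0:ℝ), Tlin N k α 1 V j x = 0) →
      ∃ c : ℂ, ∀ j : Fin N, ∀ x ∈ Set.Ioi (0:ℝ), V j x = c * (phiProf N k α ω j x : ℂ)) := by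
  have hk : 2 * k < N := by omega
  refine ⟨fun V hV => ?_, ⟨domDelta_phiProf hk ω, fun j x _ => Tlin_phiProf_eq_zero ω j x⟩,
    fun V hV hT => eq_mul_phiProf_of_Tlin_eq_zero hk ω hV hT⟩
  rw [qf_eq_sum_integral_norm_sq hk hV]
  exact Finset.sum_nonneg fun j _ => setIntegral_nonneg measurableSet_Ioi fun x _ => by positivity

/-- nonnegativity of `T^α_{2,k}` and `ker T^α_{2,k} = span{Φ_k^α}`. -/
theorem T2_nonneg_and_kernel
    (N k : ℕ) (hN : 3 ≤ N) (α ω : ℝ) (hα : α ≠ 0) (hk1 : 1 ≤ k) (hk2 : k ≤ (N - 1) / 2) :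
    (∀ V : Fin N → ℝ → ℂ, domDelta N α V → 0 ≤ qf N k α 1 V) ∧
    (domDelta N α (fun j x => (phiProf N k α ω j x : ℂ)) ∧
      (∀ j : Fin N, ∀ x ∈ Set.Ioi (0:ℝ),
        Tlin N k α 1 (fun j x => (phiProf N k α ω j x : ℂ)) j x = 0)) ∧
    (∀ V : Fin N → ℝ → ℂ, domDelta N α V →
      (∀ j : Fin N, ∀ x ∈ Set.Ioi (0:ℝ), Tlin N k α 1 V j x = 0) →
      ∃ c : ℂ, ∀ j : Fin N, ∀ x ∈ Set.Ioi (0:ℝ), V j x = c * (phiProf N k α ω j x : ℂ)) :=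
  T2_nonneg_and_kernel_general N k hN α ω hk2
end
end

section
/- Triviality of the kernel of T^α_{1,k}: Let N ≥ 3 be an integer, α ≠ 0 and k ∈ {1,…,⌊(N−1)/2⌋}. Then ker(T^α_{1,k}) = {0}: every V ∈ dom(T^α_{1,k}) with T^α_{1,k}V = 0 is identically zero. -/
open MeasureTheory Set Filter

noncomputable section

/-!
On each edge the kernel equation is the harmonic-oscillator equation at energy `3` centred at
`b = ±a`, which has the `L²` solution `(x - b) e^{-(x - b)²/2}`. The Wronskian of any `L²` solution
with it is constant and integrable on the half-line, hence zero, so every edge function is a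
multiple `c_j` of it, boundary values at the vertex included. Continuity at the vertex forces `c_j = ±τ`, with the sign
of the shift, and since `α a = (2k - N) a²` the Kirchhoff condition collapses to
`(2k - N) τ e^{-a²/2} = 0`, whence `τ = 0`.
-/

theorem exists_eq_const_mul_of_wronskian_eq_zero {s : Set ℝ} (hs : IsOpen s)
    (hs' : IsPreconnected s) {f f' g g' q : ℝ → ℂ}
    (hf : ∀ x ∈ s, HasDerivAt f (f' x) x) (hf' : ∀ x ∈ s, HasDerivAt f' (q x * f x) x)
    (hg : ∀ x ∈ s, HasDerivAt g (g' x) x) (hg' : ∀ x ∈ s, HasDerivAt g' (q x * g x) x)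
    (hW : ∀ x ∈ s, f' x * g x - f x * g' x = 0) (hQ : ∀ x ∈ s, g x ^ 2 + g' x ^ 2 ≠ 0) :
    ∃ c : ℂ, ∀ x ∈ s, f x = c * g x ∧ f' x = c * g' x := by
  -- `(f, f') = ratio • (g, g')` pointwise, and `ratio` has derivative zero because `f` and `g`
  -- solve the same equation; this avoids dividing by `g`, which may vanish.
  set ratio : ℝ → ℂ := fun x => (f x * g x + f' x * g' x) / (g x ^ 2 + g' x ^ 2)
  have hr : ∀ x ∈ s, HasDerivAt ratio 0 x := by
    intro x hx
    have hP := ((hf x hx).mul (hg x hx)).add ((hf' x hx).mul (hg' x hx))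
    have hQ' := ((hg x hx).pow 2).add ((hg' x hx).pow 2)
    refine (hP.div hQ' (hQ x hx)).congr_deriv ?_
    refine div_eq_zero_iff.2 (Or.inl ?_)
    simp only [Pi.add_apply, Pi.mul_apply, Pi.pow_apply, Nat.cast_ofNat]
    linear_combination (g x ^ 2 - g' x ^ 2) * (1 + q x) * hW x hx
  obtain ⟨c, hc⟩ := hs.exists_is_const_of_deriv_eq_zero hs'
    (fun x hx => (hr x hx).differentiableAt.differentiableWithinAt)
    (fun x hx => (hr x hx).deriv)
  refine ⟨c, fun x hx => ?_⟩
  have hcx := hc x hx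
  simp only [ratio, div_eq_iff (hQ x hx)] at hcx
  constructor
  · apply mul_left_cancel₀ (hQ x hx)
    linear_combination g x * hcx - g' x * hW x hx
  · apply mul_left_cancel₀ (hQ x hx)
    linear_combination g' x * hcx + g x * hW x hx

theorem eqOn_zero_of_hasDerivAt_zero_of_integrableOn_Ioi {E : Type*} [NormedAddCommGroup E]
    [NormedSpace ℝ E] {W : ℝ → E} {a : ℝ} (hd : ∀ x ∈ Ioi a, HasDerivAt W 0 x)
    (hi : IntegrableOn W (Ioi a)) : EqOn W 0 (Ioi a) := by
  obtain ⟨C, hC⟩ := isOpen_Ioi.exists_is_const_of_deriv_eq_zero isPreconnected_Ioi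
    (fun x hx => (hd x hx).differentiableAt.differentiableWithinAt) (fun x hx => (hd x hx).deriv)
  have hconst : IntegrableOn (fun _ => C) (Ioi a) := hi.congr_fun hC measurableSet_Ioi
  rw [integrableOn_const_iff, Real.volume_Ioi] at hconst
  simp only [enorm_eq_zero, lt_self_iff_false, or_false] at hconst
  exact fun x hx => (hC x hx).trans hconst

theorem integrable_pow_mul_exp_neg_sq (n : ℕ) :
    Integrable fun x : ℝ => x ^ n * Real.exp (-x ^ 2) := by
  simpa using integrable_rpow_mul_exp_neg_mul_sq one_pos (s := n)
    (neg_one_lt_zero.trans_le n.cast_nonneg)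

/-- The first excited state of the harmonic oscillator centred at `b`; its energy is `3`. -/
def hermiteFn (b x : ℝ) : ℝ := (x - b) * Real.exp (-(x - b) ^ 2 / 2)

def hermiteFnDeriv (b x : ℝ) : ℝ := (1 - (x - b) ^ 2) * Real.exp (-(x - b) ^ 2 / 2)

section HermiteFn

variable (b : ℝ)

theorem hasDerivAt_exp_neg_sub_sq_div_two (x : ℝ) :
    HasDerivAt (fun x => Real.exp (-(x - b) ^ 2 / 2))
      (-(x - b) * Real.exp (-(x - b) ^ 2 / 2)) x := by
  have h : HasDerivAt (fun x : ℝ => -(x - b) ^ 2 / 2) (-(x - b)) x :=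
    ((((hasDerivAt_id' x).sub_const b).pow 2).neg.div_const 2).congr_deriv (by ring)
  exact h.exp.congr_deriv (by ring)

theorem hasDerivAt_hermiteFn (x : ℝ) : HasDerivAt (hermiteFn b) (hermiteFnDeriv b x) x :=
  (((hasDerivAt_id' x).sub_const b).mul (hasDerivAt_exp_neg_sub_sq_div_two b x)).congr_deriv
    (by rw [hermiteFnDeriv]; ring)

theorem hasDerivAt_hermiteFnDeriv (x : ℝ) :
    HasDerivAt (hermiteFnDeriv b) (((x - b) ^ 2 - 3) * hermiteFn b x) x :=
  (((((hasDerivAt_id' x).sub_const b).pow 2).const_sub 1).mul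
    (hasDerivAt_exp_neg_sub_sq_div_two b x)).congr_deriv
      (by simp only [hermiteFn, Pi.pow_apply]; ring)

theorem continuous_hermiteFn : Continuous (hermiteFn b) := by
  unfold hermiteFn; fun_prop

theorem continuous_hermiteFnDeriv : Continuous (hermiteFnDeriv b) := by
  unfold hermiteFnDeriv; fun_prop

theorem exp_neg_sq_div_two_sq (t : ℝ) : Real.exp (-t ^ 2 / 2) ^ 2 = Real.exp (-t ^ 2) := by
  rw [← Real.exp_nat_mul]; ring_nf

theorem memLp_hermiteFn : MemLp (hermiteFn b) 2 := by
  rw [memLp_two_iff_integrable_sq_norm (continuous_hermiteFn b).aestronglyMeasurable]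
  refine ((integrable_pow_mul_exp_neg_sq 2).comp_sub_right b).congr (ae_of_all _ fun x => ?_)
  simp only [Real.norm_eq_abs, sq_abs, hermiteFn, mul_pow, exp_neg_sq_div_two_sq]

theorem memLp_hermiteFnDeriv : MemLp (hermiteFnDeriv b) 2 := by
  rw [memLp_two_iff_integrable_sq_norm (continuous_hermiteFnDeriv b).aestronglyMeasurable]
  have h := ((integrable_pow_mul_exp_neg_sq 0).sub
    ((integrable_pow_mul_exp_neg_sq 2).const_mul 2)).add (integrable_pow_mul_exp_neg_sq 4)
  refine (h.comp_sub_right b).congr (ae_of_all _ fun x => ?_)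
  simp only [Real.norm_eq_abs, sq_abs, hermiteFnDeriv, mul_pow, exp_neg_sq_div_two_sq,
    Pi.add_apply, Pi.sub_apply]
  ring

theorem hermiteFn_sq_add_hermiteFnDeriv_sq_pos (x : ℝ) :
    0 < hermiteFn b x ^ 2 + hermiteFnDeriv b x ^ 2 := by
  rcases eq_or_ne x b with rfl | hx
  · simp [hermiteFn, hermiteFnDeriv]
  · have : hermiteFn b x ≠ 0 := mul_ne_zero (sub_ne_zero.2 hx) (Real.exp_pos _).ne'
    positivity

theorem hermiteFn_zero : hermiteFn b 0 = -b * Real.exp (-b ^ 2 / 2) := by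
  simp [hermiteFn]

theorem hermiteFnDeriv_zero : hermiteFnDeriv b 0 = (1 - b ^ 2) * Real.exp (-b ^ 2 / 2) := by
  simp [hermiteFnDeriv]

end HermiteFn

theorem exists_eq_const_mul_hermiteFn {b : ℝ} {v : ℝ → ℂ} (hv : MemH2 v)
    (hode : ∀ x ∈ Ioi (0 : ℝ), -deriv (deriv v) x + (((x - b) ^ 2 - 3 : ℝ) : ℂ) * v x = 0) :
    ∃ c : ℂ, ∀ x ∈ Ici (0 : ℝ), v x = c * hermiteFn b x ∧ deriv v x = c * hermiteFnDeriv b x := by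
  obtain ⟨⟨hcont, hdiff, hL2, hL2'⟩, hcont', hdiff', -⟩ := hv
  set q : ℝ → ℂ := fun x => (((x - b) ^ 2 - 3 : ℝ) : ℂ)
  set g : ℝ → ℂ := fun x => (hermiteFn b x : ℂ)
  set g' : ℝ → ℂ := fun x => (hermiteFnDeriv b x : ℂ)
  have hg : ∀ x, HasDerivAt g (g' x) x := fun x => (hasDerivAt_hermiteFn b x).ofReal_comp
  have hg' : ∀ x, HasDerivAt g' (q x * g x) x := fun x => by
    simpa [q, g] using (hasDerivAt_hermiteFnDeriv b x).ofReal_comp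
  have hv1 : ∀ x ∈ Ioi (0 : ℝ), HasDerivAt v (deriv v x) x := fun x hx => (hdiff x hx).hasDerivAt
  have hv2 : ∀ x ∈ Ioi (0 : ℝ), HasDerivAt (deriv v) (q x * v x) x := fun x hx =>
    (hdiff' x hx).hasDerivAt.congr_deriv (by linear_combination -hode x hx)
  have hW : ∀ x ∈ Ioi (0 : ℝ), deriv v x * g x - v x * g' x = 0 := by
    refine eqOn_zero_of_hasDerivAt_zero_of_integrableOn_Ioi (fun x hx => ?_) ?_
    · exact (((hv2 x hx).mul (hg x)).sub ((hv1 x hx).mul (hg' x))).congr_deriv (by ring)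
    · exact (hL2'.integrable_mul ((memLp_hermiteFn b).ofReal.restrict _)).sub
        (hL2.integrable_mul ((memLp_hermiteFnDeriv b).ofReal.restrict _))
  have hQ : ∀ x ∈ Ioi (0 : ℝ), g x ^ 2 + g' x ^ 2 ≠ 0 := fun x _ => by
    simp only [g, g']
    exact_mod_cast (hermiteFn_sq_add_hermiteFnDeriv_sq_pos b x).ne'
  obtain ⟨c, hc⟩ := exists_eq_const_mul_of_wronskian_eq_zero isOpen_Ioi isPreconnected_Ioi
    hv1 hv2 (fun x _ => hg x) (fun x _ => hg' x) hW hQ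
  have hclosure : Ici (0 : ℝ) ⊆ closure (Ioi 0) := closure_Ioi (0 : ℝ) ▸ subset_rfl
  have hcg : Continuous fun x => c * g x :=
    continuous_const.mul (Complex.continuous_ofReal.comp (continuous_hermiteFn b))
  have hcg' : Continuous fun x => c * g' x :=
    continuous_const.mul (Complex.continuous_ofReal.comp (continuous_hermiteFnDeriv b))
  refine ⟨c, fun x hx => ?_⟩
  exact ⟨EqOn.of_subset_closure (fun y hy => (hc y hy).1) hcont hcg.continuousOn
      Ioi_subset_Ici_self hclosure hx,
    EqOn.of_subset_closure (fun y hy => (hc y hy).2) hcont' hcg'.continuousOn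
      Ioi_subset_Ici_self hclosure hx⟩

def edgeSign (k : ℕ) {N : ℕ} (j : Fin N) : ℝ := if (j : ℕ) < k then 1 else -1

theorem edgeSign_sq (k : ℕ) {N : ℕ} (j : Fin N) : edgeSign k j ^ 2 = 1 := by
  unfold edgeSign; split_ifs <;> norm_num

theorem sum_edgeSign {N k : ℕ} (hk : k ≤ N) : ∑ j : Fin N, edgeSign k j = 2 * k - N := by
  unfold edgeSign
  rw [Fin.sum_univ_eq_sum_range (fun j => if j < k then (1 : ℝ) else -1),
    ← Finset.sum_range_add_sum_Ico _ hk,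
    Finset.sum_congr rfl fun j hj => if_pos (Finset.mem_range.1 hj),
    Finset.sum_congr rfl fun j hj => if_neg (Finset.mem_Ico.1 hj).1.not_gt]
  simp only [Finset.sum_const, Finset.card_range, nsmul_eq_mul, mul_one,
    Nat.card_Ico, Nat.cast_sub hk]
  ring

theorem pot_eq (N k : ℕ) (α c : ℝ) (j : Fin N) (x : ℝ) :
    pot N k α c j x = (x - edgeSign k j * (α / (2 * k - N))) ^ 2 - c := by
  unfold pot edgeSign; split_ifs <;> ring

theorem coeff_eq_zero_of_vertex_conditions {N k : ℕ} (hkN : 2 * k < N) {α : ℝ} (hα : α ≠ 0)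
    {c : Fin N → ℂ} (j : Fin N)
    (hcont : ∀ i, c i * hermiteFn (edgeSign k i * (α / (2 * k - N))) 0 =
      c j * hermiteFn (edgeSign k j * (α / (2 * k - N))) 0)
    (hkirch : ∑ i, c i * hermiteFnDeriv (edgeSign k i * (α / (2 * k - N))) 0 =
      α * (c j * hermiteFn (edgeSign k j * (α / (2 * k - N))) 0)) :
    c j = 0 := by
  set d : ℝ := 2 * k - N
  set a : ℝ := α / d
  set E : ℝ := Real.exp (-a ^ 2 / 2)
  have hd : d ≠ 0 := by
    have : (2 * k : ℝ) < N := by exact_mod_cast hkN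
    simp only [d]; linarith
  have ha : a ≠ 0 := div_ne_zero hα hd
  have hE : E ≠ 0 := (Real.exp_pos _).ne'
  have hσ (i : Fin N) : ((edgeSign k i : ℝ) : ℂ) ^ 2 = 1 := by exact_mod_cast edgeSign_sq k i
  have hval (i : Fin N) : hermiteFn (edgeSign k i * a) 0 = -(edgeSign k i * a) * E := by
    rw [hermiteFn_zero, mul_pow, edgeSign_sq, one_mul]
  have hval' (i : Fin N) : hermiteFnDeriv (edgeSign k i * a) 0 = (1 - a ^ 2) * E := by
    rw [hermiteFnDeriv_zero, mul_pow, edgeSign_sq, one_mul]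
  simp only [hval, hval'] at hcont hkirch
  push_cast at hcont hkirch
  set τ : ℂ := c j * edgeSign k j
  have hc (i : Fin N) : c i = edgeSign k i * τ := by
    have : (c i * edgeSign k i - τ) * (a * E) = 0 := by linear_combination -hcont i
    have := (mul_eq_zero.1 this).resolve_right (by exact_mod_cast mul_ne_zero ha hE)
    linear_combination (edgeSign k i : ℂ) * this - c i * (hσ i)
  have hsum : ∑ i : Fin N, ((edgeSign k i : ℝ) : ℂ) = d := by
    simp only [d]; exact_mod_cast sum_edgeSign (by omega : k ≤ N)
  simp only [hc, ← Finset.sum_mul, hsum] at hkirch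
  have hαa : (α : ℂ) = a * d := by exact_mod_cast (div_mul_cancel₀ α hd).symm
  have hτ : τ * (d * E) = 0 := by
    linear_combination hkirch - a * τ * E * hαa - α * a * τ * E * hσ j
  have hτ0 : τ = 0 := (mul_eq_zero.1 hτ).resolve_right (by exact_mod_cast mul_ne_zero hd hE)
  rw [hc, hτ0, mul_zero]

theorem T1_kernel_trivial_general
    (N k : ℕ) (α : ℝ) (hα : α ≠ 0) (hk2 : k ≤ (N - 1) / 2)
    (V : Fin N → ℝ → ℂ) (hdom : domDelta N α V)
    (hker : ∀ j : Fin N, ∀ x ∈ Set.Ioi (0:ℝ), Tlin N k α 3 V j x = 0) :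
    ∀ j : Fin N, ∀ x ∈ Set.Ioi (0:ℝ), V j x = 0 := by
  obtain ⟨hW2, hcont, hkirch⟩ := hdom
  intro j x hx
  have hkN : 2 * k < N := by have := j.pos; omega
  choose c hc using fun i => exists_eq_const_mul_hermiteFn (hW2 i).1
    (fun x hx => by simpa only [Tlin, pot_eq] using hker i x hx)
  have hV0 (i : Fin N) := (hc i 0 self_mem_Ici).1
  have hV0' (i : Fin N) := (hc i 0 self_mem_Ici).2
  have hcj : c j = 0 := coeff_eq_zero_of_vertex_conditions hkN hα j
    (fun i => by simpa only [hV0] using hcont i j) (by simpa only [hV0, hV0'] using hkirch j)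
  rw [(hc j x (Ioi_subset_Ici_self hx)).1, hcj, zero_mul]

/-- the kernel of `T^α_{1,k}` is trivial. -/
theorem T1_kernel_trivial
    (N k : ℕ) (hN : 3 ≤ N) (α : ℝ) (hα : α ≠ 0) (hk1 : 1 ≤ k) (hk2 : k ≤ (N - 1) / 2)
    (V : Fin N → ℝ → ℂ) (hdom : domDelta N α V)
    (hker : ∀ j : Fin N, ∀ x ∈ Set.Ioi (0:ℝ), Tlin N k α 3 V j x = 0) :
    ∀ j : Fin N, ∀ x ∈ Set.Ioi (0:ℝ), V j x = 0 :=
  T1_kernel_trivial_general N k α hα hk2 V hdom hker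

end
end

section
/- Kernel of the unperturbed operator T⁰₁ (α = 0): Let N ≥ 2 be an integer and let φ₀(x) = e^{−x²/2}. Then the kernel of T⁰₁ is the (N−1)-dimensional space spanned by the vectors Φ̂_{0,j} = (0,…,0, φ₀', −φ₀', 0,…,0) (with φ₀' in position j and −φ₀' in position j+1), j = 1,…,N−1. Equivalently, V ∈ dom(T⁰₁) satisfies T⁰₁V = 0 if and only if V = (c_j φ₀')_{j=1}^N for constants c_j with c₁ + … + c_N = 0. -/
open MeasureTheory Set Filter

noncomputable section

/-!
Each component `f` of a kernel element solves `f'' = (x² - 3) f` on `(0, ∞)`, as does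
`φ(x) = x e^{-x²/2}`. Their Wronskian `w = f φ' - f' φ` is constant. If `w ≠ 0`, then
`(f / φ)' = -w / φ² = -w e^{x²} / x²`, which forces `|f|` to grow like `e^{x²/2} / x²`, so `f` is not
square integrable. Hence `w = 0` and `f = c φ`; since `φ'(0) = 1`, the Kirchhoff condition at the
vertex reads `∑ c_j = 0`.
-/

open Real
open scoped ENNReal ComplexConjugate

section Wronskian

variable {𝕜 : Type*} [RCLike 𝕜] {f g : ℝ → 𝕜} {s : Set ℝ}

def wronskian (f g : ℝ → 𝕜) (x : ℝ) : 𝕜 := f x * deriv g x - deriv f x * g x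

lemma hasDerivAt_wronskian {q : 𝕜} {x : ℝ} (hf : DifferentiableAt ℝ f x)
    (hf' : DifferentiableAt ℝ (deriv f) x) (hg : DifferentiableAt ℝ g x)
    (hg' : DifferentiableAt ℝ (deriv g) x) (hfq : deriv (deriv f) x = q * f x)
    (hgq : deriv (deriv g) x = q * g x) : HasDerivAt (wronskian f g) 0 x := by
  refine ((hf.hasDerivAt.mul hg'.hasDerivAt).sub
    (hf'.hasDerivAt.mul hg.hasDerivAt)).congr_deriv ?_
  rw [hfq, hgq]
  ring

lemma IsOpen.exists_forall_wronskian_eq (hs : IsOpen s) (hs' : IsPreconnected s) {q : ℝ → 𝕜}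
    (hf : ∀ x ∈ s, DifferentiableAt ℝ f x) (hf' : ∀ x ∈ s, DifferentiableAt ℝ (deriv f) x)
    (hg : ∀ x ∈ s, DifferentiableAt ℝ g x) (hg' : ∀ x ∈ s, DifferentiableAt ℝ (deriv g) x)
    (hfq : ∀ x ∈ s, deriv (deriv f) x = q x * f x)
    (hgq : ∀ x ∈ s, deriv (deriv g) x = q x * g x) :
    ∃ w, ∀ x ∈ s, wronskian f g x = w := by
  have hW : ∀ x ∈ s, HasDerivAt (wronskian f g) 0 x := fun x hx =>
    hasDerivAt_wronskian (hf x hx) (hf' x hx) (hg x hx) (hg' x hx) (hfq x hx) (hgq x hx)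
  exact hs.exists_is_const_of_deriv_eq_zero hs'
    (fun x hx => (hW x hx).differentiableAt.differentiableWithinAt) (fun x hx => (hW x hx).deriv)

lemma hasDerivAt_div_eq_neg_wronskian {x : ℝ} (hf : DifferentiableAt ℝ f x)
    (hg : DifferentiableAt ℝ g x) (hgx : g x ≠ 0) :
    HasDerivAt (fun y => f y / g y) (-wronskian f g x / g x ^ 2) x := by
  refine (hf.hasDerivAt.div hg.hasDerivAt hgx).congr_deriv ?_
  rw [wronskian]
  ring

lemma IsOpen.exists_eqOn_const_mul_of_wronskian_eq_zero (hs : IsOpen s) (hs' : IsPreconnected s)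
    (hf : ∀ x ∈ s, DifferentiableAt ℝ f x) (hg : ∀ x ∈ s, DifferentiableAt ℝ g x)
    (hg0 : ∀ x ∈ s, g x ≠ 0) (hW : ∀ x ∈ s, wronskian f g x = 0) :
    ∃ c, ∀ x ∈ s, f x = c * g x := by
  have hquot : ∀ x ∈ s, HasDerivAt (fun y => f y / g y) 0 x := fun x hx => by
    simpa [hW x hx] using hasDerivAt_div_eq_neg_wronskian (hf x hx) (hg x hx) (hg0 x hx)
  obtain ⟨c, hc⟩ := hs.exists_is_const_of_deriv_eq_zero hs'
    (fun x hx => (hquot x hx).differentiableAt.differentiableWithinAt)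
    (fun x hx => (hquot x hx).deriv)
  exact ⟨c, fun x hx => by rw [← hc x hx, div_mul_cancel₀ _ (hg0 x hx)]⟩

end Wronskian

/-- `x e^{-x²/2} = -φ₀'(x)` for `φ₀(x) = e^{-x²/2}`. -/
def hermiteOne (x : ℝ) : ℝ := x * exp (-x ^ 2 / 2)

def hermiteOneDeriv (x : ℝ) : ℝ := (1 - x ^ 2) * exp (-x ^ 2 / 2)

lemma hasDerivAt_exp_neg_sq_div_two (x : ℝ) :
    HasDerivAt (fun y => exp (-y ^ 2 / 2)) (-x * exp (-x ^ 2 / 2)) x := by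
  have h : HasDerivAt (fun y : ℝ => -y ^ 2 / 2) (-x) x :=
    ((hasDerivAt_pow 2 x).neg.div_const 2).congr_deriv (by ring)
  simpa [mul_comm] using h.exp

lemma hasDerivAt_hermiteOne (x : ℝ) : HasDerivAt hermiteOne (hermiteOneDeriv x) x := by
  refine ((hasDerivAt_id x).mul (hasDerivAt_exp_neg_sq_div_two x)).congr_deriv ?_
  simp only [hermiteOneDeriv, id]
  ring

lemma hasDerivAt_hermiteOneDeriv (x : ℝ) :
    HasDerivAt hermiteOneDeriv ((x ^ 2 - 3) * hermiteOne x) x := by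
  refine (((hasDerivAt_pow 2 x).const_sub 1).mul
    (hasDerivAt_exp_neg_sq_div_two x)).congr_deriv ?_
  simp only [hermiteOne]
  ring

lemma hermiteOne_pos {x : ℝ} (hx : 0 < x) : 0 < hermiteOne x :=
  mul_pos hx (exp_pos _)

lemma hermiteOne_le_one (x : ℝ) : hermiteOne x ≤ 1 := by
  have hx : x ≤ exp (x ^ 2 / 2) := by
    nlinarith [add_one_le_exp (x ^ 2 / 2), sq_nonneg (x - 1)]
  have hE : exp (-x ^ 2 / 2) * exp (x ^ 2 / 2) = 1 := by
    rw [← exp_add]; ring_nf; exact exp_zero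
  calc hermiteOne x = exp (-x ^ 2 / 2) * x := mul_comm _ _
    _ ≤ exp (-x ^ 2 / 2) * exp (x ^ 2 / 2) := by gcongr
    _ = 1 := hE

lemma deriv_ofReal_hermiteOne :
    deriv (fun y => (hermiteOne y : ℂ)) = fun x => (hermiteOneDeriv x : ℂ) :=
  funext fun x => (hasDerivAt_hermiteOne x).ofReal_comp.deriv

lemma hasDerivAt_ofReal_hermiteOneDeriv (x : ℝ) :
    HasDerivAt (fun y => (hermiteOneDeriv y : ℂ)) (((x : ℂ) ^ 2 - 3) * hermiteOne x) x := by
  convert (hasDerivAt_hermiteOneDeriv x).ofReal_comp using 1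
  push_cast
  ring

lemma tendsto_exp_sq_div_two_div_sq_atTop :
    Tendsto (fun x : ℝ => exp (x ^ 2 / 2) / x ^ 2) atTop atTop := by
  have hsq : Tendsto (fun x : ℝ => x ^ 2 / 2) atTop atTop :=
    (tendsto_pow_atTop two_ne_zero).atTop_div_const two_pos
  have h := ((tendsto_exp_div_pow_atTop 1).comp hsq).atTop_div_const two_pos
  refine h.congr fun x => ?_
  simp only [Function.comp_apply, pow_one]
  rw [div_div, div_mul_cancel₀ _ two_ne_zero]

lemma hermiteOne_eq_div (x : ℝ) : hermiteOne x = x / exp (x ^ 2 / 2) := by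
  rw [hermiteOne, neg_div, exp_neg, ← div_eq_mul_inv]

lemma hermiteOneDeriv_eq_div (x : ℝ) : hermiteOneDeriv x = (1 - x ^ 2) / exp (x ^ 2 / 2) := by
  rw [hermiteOneDeriv, neg_div, exp_neg, ← div_eq_mul_inv]

lemma tendsto_atBot_of_wronskian_hermiteOne_pos {r r' : ℝ → ℝ} {a : ℝ} (ha : 0 < a)
    (hr : ∀ x ∈ Ici (1 : ℝ), HasDerivAt r (r' x) x)
    (hW : ∀ x ∈ Ici (1 : ℝ), r x * hermiteOneDeriv x - r' x * hermiteOne x = a) :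
    Tendsto r atTop atBot := by
  -- The correction term cancels `(r / φ)' = -a e^{x²} / x²` up to `-(3a/2) e^{x²} / x⁴`.
  set G : ℝ → ℝ := fun x => r x / hermiteOne x + a / 2 * (exp (x ^ 2 / 2) ^ 2 / x ^ 3)
  have hG : ∀ x ∈ Ici (1 : ℝ), HasDerivAt G (-(3 * a / 2 * exp (x ^ 2 / 2) ^ 2 / x ^ 4)) x := by
    intro x hx
    have hx0 : 0 < x := lt_of_lt_of_le one_pos hx
    have hE : HasDerivAt (fun y => exp (y ^ 2 / 2)) (x * exp (x ^ 2 / 2)) x := by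
      have := ((hasDerivAt_pow 2 x).div_const 2).exp
      refine this.congr_deriv ?_
      push_cast
      ring
    refine (((hr x hx).div (hasDerivAt_hermiteOne x) (hermiteOne_pos hx0).ne').add
      (((hE.pow 2).div (hasDerivAt_pow 3 x) (by positivity)).const_mul (a / 2))).congr_deriv ?_
    have hφ : hermiteOne x ^ 2 = x ^ 2 / exp (x ^ 2 / 2) ^ 2 := by
      rw [hermiteOne_eq_div, div_pow]
    rw [show r' x * hermiteOne x - r x * hermiteOneDeriv x = -a by linarith [hW x hx], hφ]
    simp only [Pi.pow_apply]
    field_simp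
    ring
  have hanti : AntitoneOn G (Ici 1) := by
    refine antitoneOn_of_hasDerivWithinAt_nonpos (convex_Ici 1)
      (fun x hx => (hG x hx).continuousAt.continuousWithinAt)
      (fun x hx => (hG x (interior_subset hx)).hasDerivWithinAt)
      fun _ _ => neg_nonpos.mpr (by positivity)
  have hbound : ∀ x ∈ Ici (1 : ℝ), r x ≤ |G 1| - a / 2 * (exp (x ^ 2 / 2) / x ^ 2) := by
    intro x hx
    have hx0 : 0 < x := lt_of_lt_of_le one_pos hx
    have hφ := hermiteOne_pos hx0
    have hGx : G x ≤ G 1 := hanti self_mem_Ici hx hx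
    have hr : r x = (G x - a / 2 * (exp (x ^ 2 / 2) ^ 2 / x ^ 3)) * hermiteOne x := by
      simp only [G]
      field_simp
      ring
    have hrest : a / 2 * (exp (x ^ 2 / 2) ^ 2 / x ^ 3) * hermiteOne x
        = a / 2 * (exp (x ^ 2 / 2) / x ^ 2) := by
      rw [hermiteOne_eq_div]
      field_simp
    calc r x = G x * hermiteOne x - a / 2 * (exp (x ^ 2 / 2) / x ^ 2) := by
          rw [hr, sub_mul, hrest]
      _ ≤ |G 1| - a / 2 * (exp (x ^ 2 / 2) / x ^ 2) := by
          refine sub_le_sub_right ?_ _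
          calc G x * hermiteOne x ≤ |G 1| * hermiteOne x := by
                gcongr; exact hGx.trans (le_abs_self _)
            _ ≤ |G 1| := mul_le_of_le_one_right (abs_nonneg _) (hermiteOne_le_one x)
  refine tendsto_atBot_mono' _ (eventually_ge_atTop 1 |>.mono hbound) ?_
  simpa only [sub_eq_add_neg, Function.comp_def] using tendsto_atBot_add_const_left _ |G 1|
    (tendsto_neg_atTop_atBot.comp
      (tendsto_exp_sq_div_two_div_sq_atTop.const_mul_atTop (half_pos ha)))

lemma not_memLp_restrict_Ioi_of_tendsto_norm_atTop {E : Type*} [NormedAddCommGroup E]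
    {f : ℝ → E} {p : ℝ≥0∞} (hp0 : p ≠ 0) (hp : p ≠ ∞) (a : ℝ)
    (hf : Tendsto (fun x => ‖f x‖) atTop atTop) : ¬ MemLp f p (volume.restrict (Ioi a)) := by
  intro hLp
  obtain ⟨M, hM⟩ := (hf.eventually_ge_atTop 1).exists_forall_of_atTop
  have hone : MemLp (fun _ => (1 : ℝ)) p (volume.restrict (Ioi (max a M))) := by
    have h := hLp.restrict (Ioi (max a M))
    rw [Measure.restrict_restrict measurableSet_Ioi,
      inter_eq_left.2 (Ioi_subset_Ioi (le_max_left a M))] at h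
    refine h.mono aestronglyMeasurable_const ?_
    filter_upwards [self_mem_ae_restrict measurableSet_Ioi] with x hx
    simpa using hM x (le_of_max_le_right hx.le)
  rcases (memLp_const_iff hp0 hp).1 hone with h | h
  · exact one_ne_zero h
  · simp [Real.volume_Ioi] at h

lemma tendsto_norm_atTop_of_wronskian_hermiteOne_ne_zero {f : ℝ → ℂ} {w : ℂ} (hw : w ≠ 0)
    (hf : ∀ x ∈ Ioi (0 : ℝ), DifferentiableAt ℝ f x)
    (hW : ∀ x ∈ Ioi (0 : ℝ), wronskian f (fun y => (hermiteOne y : ℂ)) x = w) :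
    Tendsto (fun x => ‖f x‖) atTop atTop := by
  have hpos : ∀ x ∈ Ici (1 : ℝ), x ∈ Ioi (0 : ℝ) := fun x hx =>
    mem_Ioi.2 (lt_of_lt_of_le one_pos hx)
  -- Pairing with `conj w` makes the Wronskian of the real part equal to `‖w‖² > 0`.
  have hr : ∀ x ∈ Ici (1 : ℝ), HasDerivAt (fun y => (conj w * f y).re)
      (conj w * deriv f x).re x := fun x hx =>
    Complex.reCLM.hasFDerivAt.comp_hasDerivAt x ((hf x (hpos x hx)).hasDerivAt.const_mul _)
  have hrW : ∀ x ∈ Ici (1 : ℝ), (conj w * f x).re * hermiteOneDeriv x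
      - (conj w * deriv f x).re * hermiteOne x = ‖w‖ ^ 2 := by
    intro x hx
    have h := congr_arg (fun z => (conj w * z).re) (hW x (hpos x hx))
    simp only [wronskian, deriv_ofReal_hermiteOne, Complex.conj_mul'] at h
    rw [← Complex.ofReal_pow, Complex.ofReal_re] at h
    rw [← h]
    simp only [mul_sub, ← mul_assoc, Complex.sub_re, Complex.re_mul_ofReal]
  have hbot := tendsto_atBot_of_wronskian_hermiteOne_pos (pow_pos (norm_pos_iff.2 hw) 2) hr hrW
  refine tendsto_atTop_mono (fun x => ?_)
    ((tendsto_neg_atBot_atTop.comp hbot).atTop_div_const (norm_pos_iff.2 hw))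
  rw [Function.comp_apply, div_le_iff₀' (norm_pos_iff.2 hw)]
  calc -(conj w * f x).re ≤ ‖conj w * f x‖ := (neg_le_abs _).trans (Complex.abs_re_le_norm _)
    _ = ‖w‖ * ‖f x‖ := by rw [norm_mul, Complex.norm_conj]

lemma exists_eqOn_const_mul_hermiteOne {f : ℝ → ℂ}
    (hf : ∀ x ∈ Ioi (0 : ℝ), DifferentiableAt ℝ f x)
    (hf' : ∀ x ∈ Ioi (0 : ℝ), DifferentiableAt ℝ (deriv f) x) (hL2 : MemL2 f)
    (hode : ∀ x ∈ Ioi (0 : ℝ), deriv (deriv f) x = ((x : ℂ) ^ 2 - 3) * f x) :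
    ∃ c : ℂ, ∀ x ∈ Ioi (0 : ℝ), f x = c * hermiteOne x := by
  have hφ (x : ℝ) : DifferentiableAt ℝ (fun y => (hermiteOne y : ℂ)) x :=
    (hasDerivAt_hermiteOne x).ofReal_comp.differentiableAt
  have hφ' (x : ℝ) : DifferentiableAt ℝ (deriv fun y => (hermiteOne y : ℂ)) x := by
    rw [deriv_ofReal_hermiteOne]
    exact (hasDerivAt_ofReal_hermiteOneDeriv x).differentiableAt
  have hφode (x : ℝ) : deriv (deriv fun y => (hermiteOne y : ℂ)) x
      = ((x : ℂ) ^ 2 - 3) * hermiteOne x := by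
    rw [deriv_ofReal_hermiteOne]
    exact (hasDerivAt_ofReal_hermiteOneDeriv x).deriv
  obtain ⟨w, hw⟩ := isOpen_Ioi.exists_forall_wronskian_eq isPreconnected_Ioi hf hf'
    (fun x _ => hφ x) (fun x _ => hφ' x) hode (fun x _ => hφode x)
  rcases eq_or_ne w 0 with rfl | hw0
  · exact isOpen_Ioi.exists_eqOn_const_mul_of_wronskian_eq_zero isPreconnected_Ioi hf
      (fun x _ => hφ x) (fun x hx => Complex.ofReal_ne_zero.2 (hermiteOne_pos hx).ne') hw
  · exact absurd hL2 (not_memLp_restrict_Ioi_of_tendsto_norm_atTop two_ne_zero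
      ENNReal.ofNat_ne_top 0 (tendsto_norm_atTop_of_wronskian_hermiteOne_ne_zero hw0 hf hw))

section ConstMulHermiteOne

variable {f : ℝ → ℂ} {c : ℂ}

lemma deriv_eq_of_eqOn_const_mul_hermiteOne (hfc : ∀ x ∈ Ioi (0 : ℝ), f x = c * hermiteOne x)
    {x : ℝ} (hx : x ∈ Ioi (0 : ℝ)) : deriv f x = c * hermiteOneDeriv x := by
  rw [Set.EqOn.deriv (g := fun y => c * hermiteOne y) hfc isOpen_Ioi hx]
  exact ((hasDerivAt_hermiteOne x).ofReal_comp.const_mul c).deriv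

lemma deriv_deriv_eq_of_eqOn_const_mul_hermiteOne
    (hfc : ∀ x ∈ Ioi (0 : ℝ), f x = c * hermiteOne x) {x : ℝ} (hx : x ∈ Ioi (0 : ℝ)) :
    deriv (deriv f) x = ((x : ℂ) ^ 2 - 3) * f x := by
  rw [Set.EqOn.deriv (g := fun y => c * hermiteOneDeriv y)
    (fun y hy => deriv_eq_of_eqOn_const_mul_hermiteOne hfc hy) isOpen_Ioi hx,
    ((hasDerivAt_ofReal_hermiteOneDeriv x).const_mul c).deriv, hfc x hx]
  ring

lemma deriv_zero_eq_of_eqOn_const_mul_hermiteOne (hf : ContinuousWithinAt (deriv f) (Ioi 0) 0)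
    (hfc : ∀ x ∈ Ioi (0 : ℝ), f x = c * hermiteOne x) : deriv f 0 = c := by
  have hlim : ContinuousWithinAt (fun y => c * hermiteOneDeriv y) (Ioi 0) 0 :=
    ((hasDerivAt_ofReal_hermiteOneDeriv 0).const_mul c).continuousAt.continuousWithinAt
  have heq := tendsto_nhds_unique hf (hlim.congr' (eventually_nhdsWithin_of_forall
    fun x hx => (deriv_eq_of_eqOn_const_mul_hermiteOne hfc hx).symm))
  simpa [hermiteOneDeriv] using heq

end ConstMulHermiteOne

lemma pot_zero_zero (N : ℕ) (c : ℝ) (j : Fin N) (x : ℝ) : pot N 0 0 c j x = x ^ 2 - c := by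
  simp [pot]

/-- the kernel of the unperturbed operator `T⁰₁` (Kirchhoff condition, `α = 0`)
consists exactly of the tuples `(c_j φ₀')_j` with `∑ c_j = 0`, where `φ₀'(x) = -x e^{-x²/2}`. -/
theorem T01_kernel (N : ℕ) (hN : 2 ≤ N) (V : Fin N → ℝ → ℂ) (hdom : domDelta N 0 V) :
    (∀ j : Fin N, ∀ x ∈ Set.Ioi (0:ℝ), Tlin N 0 0 3 V j x = 0) ↔
    (∃ c : Fin N → ℂ, (∑ j, c j) = 0 ∧
      ∀ j : Fin N, ∀ x ∈ Set.Ioi (0:ℝ),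
        V j x = c j * ((-x * Real.exp (-x^2/2) : ℝ) : ℂ)) := by
  obtain ⟨hW2, -, hkir⟩ := hdom
  have hT (j : Fin N) (x : ℝ) :
      Tlin N 0 0 3 V j x = -deriv (deriv (V j)) x + ((x : ℂ) ^ 2 - 3) * V j x := by
    simp [Tlin, pot_zero_zero]
  constructor
  · intro hker
    choose K hK using fun j => exists_eqOn_const_mul_hermiteOne (hW2 j).1.1.2.1
      (hW2 j).1.2.2.1 (hW2 j).1.1.2.2.1 fun x hx => by
        linear_combination -((hT j x).symm.trans (hker j x hx))
    have hsum : ∑ j, K j = 0 := by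
      simpa [deriv_zero_eq_of_eqOn_const_mul_hermiteOne
        ((hW2 _).1.2.1 0 self_mem_Ici |>.mono Ioi_subset_Ici_self) (hK _)]
        using hkir ⟨0, by omega⟩
    refine ⟨-K, by simp [hsum], fun j x hx => ?_⟩
    rw [hK j x hx, hermiteOne, Pi.neg_apply]
    push_cast
    ring
  · rintro ⟨c, -, hc⟩ j x hx
    have hV : ∀ y ∈ Ioi (0 : ℝ), V j y = -c j * hermiteOne y := fun y hy => by
      rw [hc j y hy, hermiteOne]
      push_cast
      ring
    rw [hT, deriv_deriv_eq_of_eqOn_const_mul_hermiteOne hV hx]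
    ring
end
end

section
/- Kernel of T⁰₁ on the symmetric subspace: Let N ≥ 3 be an integer, k ∈ {1,…,⌊(N−1)/2⌋} and φ₀(x) = e^{−x²/2}. Then the kernel of T⁰₁ restricted to L²_k(G) is the one-dimensional span of Φ̃_{0,k} = (((N−k)/k)φ₀', …, ((N−k)/k)φ₀', −φ₀', …, −φ₀'), where the first k components equal ((N−k)/k)φ₀' and the last N−k components equal −φ₀'. That is, every V ∈ dom(T⁰₁) ∩ L²_k(G) with T⁰₁V = 0 is a scalar multiple of Φ̃_{0,k}, and Φ̃_{0,k} itself lies in this kernel. -/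
open MeasureTheory Set Filter

noncomputable section

/-- The function `Φ̃_{0,k}`: first `k` components `((N-k)/k) φ₀'`, last `N-k` components `-φ₀'`,
where `φ₀(x) = e^{-x²/2}`, so `φ₀'(x) = -x e^{-x²/2}`. -/
def tildePhi (N k : ℕ) (j : Fin N) (x : ℝ) : ℝ :=
  if (j : ℕ) < k then (((N:ℝ) - (k:ℝ)) / (k:ℝ)) * (-x * Real.exp (-x^2/2))
  else -(-x * Real.exp (-x^2/2))

/-!
Each component of a kernel element solves `-v'' + (x² - 3) v = 0` on `(0, ∞)` with `v, v' ∈ L²`.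
Its Wronskian with the decaying solution `ψ(x) = x e^{-x²/2} = -φ₀'(x)` is constant and, as a
product of `L²` functions, integrable over a half-line of infinite measure; so it vanishes and
`v = c ψ`. Since `ψ(0) = 0` and `ψ'(0) = 1`, the vertex conditions reduce to `∑ c_j = 0`, and
`V ∈ L²_k` makes `c` equal to some `a` on the first `k` edges and to some `b` on the others, so
`k a + (N - k) b = 0`.
-/

open Topology Polynomial

namespace StarGraphKernel

lemma mu_univ : mu univ = ⊤ := by
  simp [mu]

lemma memL2_pow_mul_gaussian (n : ℕ) :
    MemL2 (fun x => ((x ^ n * Real.exp (-x ^ 2 / 2) : ℝ) : ℂ)) := by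
  rw [MemL2, memLp_two_iff_integrable_sq_norm (by fun_prop)]
  have hint := integrableOn_rpow_mul_exp_neg_mul_sq one_pos (s := ((2 * n : ℕ) : ℝ))
    (by linarith [(2 * n).cast_nonneg (α := ℝ)])
  refine hint.congr_fun (fun x _ => ?_) measurableSet_Ioi
  beta_reduce
  rw [Complex.norm_real, Real.norm_eq_abs, sq_abs, Real.rpow_natCast, mul_pow, pow_mul',
    ← Real.exp_nat_mul]
  ring_nf

lemma memL2_eval_mul_gaussian (p : ℝ[X]) :
    MemL2 (fun x => ((p.eval x * Real.exp (-x ^ 2 / 2) : ℝ) : ℂ)) := by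
  induction p using Polynomial.induction_on' with
  | add p q hp hq =>
    rw [MemL2] at *
    convert hp.add hq using 1
    funext x; simp [add_mul]
  | monomial n a =>
    rw [MemL2]
    convert (memL2_pow_mul_gaussian n).const_mul (a : ℂ) using 1
    funext x; simp [mul_assoc]

lemma memL2_of_eq_eval_mul_gaussian (p : ℝ[X]) {f : ℝ → ℝ}
    (hf : ∀ x, f x = p.eval x * Real.exp (-x ^ 2 / 2)) : MemL2 (fun x => (f x : ℂ)) := by
  simpa only [hf] using memL2_eval_mul_gaussian p

lemma hasDerivAt_gaussian (x : ℝ) :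
    HasDerivAt (fun x => Real.exp (-x ^ 2 / 2)) (-x * Real.exp (-x ^ 2 / 2)) x := by
  have h := (hasDerivAt_pow 2 x).neg.div_const 2
  simp only [Pi.neg_apply] at h
  convert h.exp using 1
  push_cast; ring

def psi (x : ℝ) : ℝ := x * Real.exp (-x ^ 2 / 2)

lemma psi_pos {x : ℝ} (hx : 0 < x) : 0 < psi x := mul_pos hx (Real.exp_pos _)

lemma hasDerivAt_psi (x : ℝ) : HasDerivAt psi ((1 - x ^ 2) * Real.exp (-x ^ 2 / 2)) x :=
  ((hasDerivAt_id' x).mul (hasDerivAt_gaussian x)).congr_deriv (by ring)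

lemma differentiable_psi : Differentiable ℝ psi := fun x => (hasDerivAt_psi x).differentiableAt

lemma deriv_psi : deriv psi = fun x => (1 - x ^ 2) * Real.exp (-x ^ 2 / 2) :=
  funext fun x => (hasDerivAt_psi x).deriv

lemma hasDerivAt_deriv_psi (x : ℝ) : HasDerivAt (deriv psi) ((x ^ 2 - 3) * psi x) x := by
  rw [deriv_psi]
  exact (((hasDerivAt_pow 2 x).const_sub 1).mul (hasDerivAt_gaussian x)).congr_deriv
    (by unfold psi; push_cast; ring)

lemma deriv_psi_zero : deriv psi 0 = 1 := by simp [deriv_psi]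

lemma deriv_const_mul_psi (c : ℂ) :
    deriv (fun x => c * (psi x : ℂ)) = fun x => c * ((deriv psi x : ℝ) : ℂ) :=
  funext fun x => ((differentiable_psi x).hasDerivAt.ofReal_comp.const_mul c).deriv

lemma deriv_deriv_const_mul_psi (c : ℂ) :
    deriv (deriv (fun x => c * (psi x : ℂ))) = fun x => c * (((x ^ 2 - 3) * psi x : ℝ) : ℂ) := by
  rw [deriv_const_mul_psi]
  exact funext fun x => ((hasDerivAt_deriv_psi x).ofReal_comp.const_mul c).deriv

lemma memL2_psi : MemL2 (fun x => (psi x : ℂ)) :=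
  memL2_of_eq_eval_mul_gaussian X (fun x => by simp [psi])

lemma memL2_deriv_psi : MemL2 (fun x => ((deriv psi x : ℝ) : ℂ)) :=
  memL2_of_eq_eval_mul_gaussian (1 - X ^ 2) (fun x => by simp [deriv_psi])

lemma memW2_const_mul_psi (c : ℂ) : MemW2 (fun x => c * (psi x : ℂ)) := by
  refine ⟨⟨⟨by fun_prop [psi], fun x _ => ?_, memL2_psi.const_mul c, ?_⟩, ?_, fun x _ => ?_, ?_⟩,
    ?_⟩
  · exact ((hasDerivAt_psi x).ofReal_comp.const_mul c).differentiableAt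
  · rw [deriv_const_mul_psi]
    exact memL2_deriv_psi.const_mul c
  · rw [deriv_const_mul_psi, deriv_psi]
    fun_prop
  · rw [deriv_const_mul_psi]
    exact ((hasDerivAt_deriv_psi x).ofReal_comp.const_mul c).differentiableAt
  · rw [deriv_deriv_const_mul_psi]
    exact (memL2_of_eq_eval_mul_gaussian (X ^ 3 - 3 * X)
      (f := fun x => (x ^ 2 - 3) * psi x) (fun x => by simp [psi]; ring)).const_mul c
  · rw [MemL2]
    convert (memL2_of_eq_eval_mul_gaussian (X ^ 3) (f := fun x => x ^ 2 * psi x)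
      (fun x => by simp [psi]; ring)).const_mul c using 2
    push_cast; ring

lemma Tlin_const_mul_psi_eq_zero (N k : ℕ) (c : Fin N → ℂ) (j : Fin N) (x : ℝ) :
    Tlin N k 0 3 (fun j x => c j * (psi x : ℂ)) j x = 0 := by
  simp only [Tlin, deriv_deriv_const_mul_psi, pot]
  split_ifs <;> push_cast <;> ring

lemma exists_forall_Ioi_eq_of_hasDerivAt_zero {E : Type*} [NormedAddCommGroup E]
    [NormedSpace ℝ E] {f : ℝ → E} {a : ℝ} (hf : ∀ x ∈ Ioi a, HasDerivAt f 0 x) :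
    ∃ c, ∀ x ∈ Ioi a, f x = c :=
  isOpen_Ioi.exists_is_const_of_deriv_eq_zero isPreconnected_Ioi
    (fun x hx => (hf x hx).differentiableAt.differentiableWithinAt) (fun x hx => (hf x hx).deriv)

lemma eq_zero_of_integrable_of_forall_Ioi_eq {f : ℝ → ℂ} {c : ℂ} (hf : Integrable f mu)
    (hc : ∀ x ∈ Ioi 0, f x = c) : c = 0 := by
  have hconst : Integrable (fun _ => c) mu :=
    hf.congr (ae_restrict_of_forall_mem measurableSet_Ioi hc)
  rcases integrable_const_iff.1 hconst with h | h
  · exact h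
  · exact absurd mu_univ h.measure_univ_lt_top.ne

lemma wronskian_psi_eq_zero {u : ℝ → ℂ} (hu : ∀ x ∈ Ioi 0, DifferentiableAt ℝ u x)
    (hu' : ∀ x ∈ Ioi 0, DifferentiableAt ℝ (deriv u) x) (hL2 : MemL2 u) (hL2' : MemL2 (deriv u))
    (hode : ∀ x ∈ Ioi 0, deriv (deriv u) x = ((x : ℂ) ^ 2 - 3) * u x) :
    ∀ x ∈ Ioi 0, u x * (deriv psi x : ℝ) = deriv u x * psi x := by
  set W : ℝ → ℂ := fun x => u x * (deriv psi x : ℝ) - deriv u x * psi x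
  have hW' : ∀ x ∈ Ioi 0, HasDerivAt W 0 x := fun x hx => by
    have hu'' : HasDerivAt (deriv u) (((x : ℂ) ^ 2 - 3) * u x) x :=
      hode x hx ▸ (hu' x hx).hasDerivAt
    refine (((hu x hx).hasDerivAt.mul (hasDerivAt_deriv_psi x).ofReal_comp).sub
      (hu''.mul (differentiable_psi x).hasDerivAt.ofReal_comp)).congr_deriv ?_
    push_cast; ring
  obtain ⟨w, hw⟩ := exists_forall_Ioi_eq_of_hasDerivAt_zero hW'
  have hWint : Integrable W mu :=
    (hL2.integrable_mul memL2_deriv_psi).sub (hL2'.integrable_mul memL2_psi)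
  intro x hx
  rw [← sub_eq_zero]
  exact (hw x hx).trans (eq_zero_of_integrable_of_forall_Ioi_eq hWint hw)

lemma exists_eq_const_mul_psi_of_wronskian {u : ℝ → ℂ}
    (hu : ∀ x ∈ Ioi 0, DifferentiableAt ℝ u x)
    (hW : ∀ x ∈ Ioi 0, u x * (deriv psi x : ℝ) = deriv u x * psi x) :
    ∃ c : ℂ, ∀ x ∈ Ioi 0, u x = c * psi x := by
  have hpsi : ∀ x ∈ Ioi (0 : ℝ), (psi x : ℂ) ≠ 0 := fun x hx =>
    Complex.ofReal_ne_zero.2 (psi_pos hx).ne'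
  have hquot : ∀ x ∈ Ioi 0, HasDerivAt (fun y => u y / psi y) 0 x := fun x hx => by
    refine ((hu x hx).hasDerivAt.div (differentiable_psi x).hasDerivAt.ofReal_comp
      (hpsi x hx)).congr_deriv ?_
    rw [hW x hx, sub_self, zero_div]
  obtain ⟨c, hc⟩ := exists_forall_Ioi_eq_of_hasDerivAt_zero hquot
  exact ⟨c, fun x hx => (div_eq_iff (hpsi x hx)).1 (hc x hx)⟩

lemma exists_eq_const_mul_psi_of_ode {u : ℝ → ℂ} (hu : ∀ x ∈ Ioi 0, DifferentiableAt ℝ u x)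
    (hu' : ∀ x ∈ Ioi 0, DifferentiableAt ℝ (deriv u) x) (hL2 : MemL2 u) (hL2' : MemL2 (deriv u))
    (hode : ∀ x ∈ Ioi 0, deriv (deriv u) x = ((x : ℂ) ^ 2 - 3) * u x) :
    ∃ c : ℂ, ∀ x ∈ Ioi 0, u x = c * psi x :=
  exists_eq_const_mul_psi_of_wronskian hu (wronskian_psi_eq_zero hu hu' hL2 hL2' hode)

lemma eq_of_forall_Ioi_eq_of_continuousWithinAt {E : Type*} [TopologicalSpace E] [T2Space E]
    {f g : ℝ → E} {a : ℝ} (hf : ContinuousWithinAt f (Ici a) a)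
    (hg : ContinuousWithinAt g (Ici a) a) (h : ∀ x ∈ Ioi a, f x = g x) : f a = g a :=
  tendsto_nhds_unique
    ((hf.mono Ioi_subset_Ici_self).tendsto.congr' (eventually_nhdsWithin_of_forall h))
    (hg.mono Ioi_subset_Ici_self).tendsto

lemma deriv_zero_eq_of_forall_Ioi_eq {f : ℝ → ℂ} {c : ℂ} (hf : ContinuousOn (deriv f) (Ici 0))
    (h : ∀ x ∈ Ioi 0, f x = c * psi x) : deriv f 0 = c := by
  have hderiv : ∀ x ∈ Ioi (0 : ℝ), deriv f x = c * (deriv psi x : ℝ) := fun x hx => by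
    have hfx : f =ᶠ[𝓝 x] fun y => c * psi y := eventually_of_mem (Ioi_mem_nhds hx) h
    rw [hfx.deriv_eq]
    exact ((differentiable_psi x).hasDerivAt.ofReal_comp.const_mul c).deriv
  have hcont : ContinuousWithinAt (fun x => c * (deriv psi x : ℝ)) (Ici 0) 0 := by
    rw [deriv_psi]; fun_prop
  simpa [deriv_psi_zero] using
    eq_of_forall_Ioi_eq_of_continuousWithinAt (hf 0 self_mem_Ici) hcont hderiv

lemma eq_of_ae_eq_of_forall_Ioi_eq {f g : ℝ → ℂ} {a b : ℂ} (hfg : f =ᵐ[mu] g)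
    (hf : ∀ x ∈ Ioi 0, f x = a * psi x) (hg : ∀ x ∈ Ioi 0, g x = b * psi x) : a = b := by
  have : NeBot (ae mu) := ae_neBot.2 fun h => by simpa [h] using mu_univ
  have hmem : ∀ᵐ x ∂mu, x ∈ Ioi (0 : ℝ) := ae_restrict_mem measurableSet_Ioi
  obtain ⟨x, hx, hfgx⟩ := (hmem.and hfg).exists
  rw [hf x hx, hg x hx] at hfgx
  exact mul_right_cancel₀ (Complex.ofReal_ne_zero.2 (psi_pos hx).ne') hfgx

lemma exists_coeff_of_Tlin_eq_zero {N k : ℕ} {V : Fin N → ℝ → ℂ} (hV : domDelta N 0 V)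
    (hT : ∀ j, ∀ x ∈ Ioi 0, Tlin N k 0 3 V j x = 0) :
    ∃ c : Fin N → ℂ, (∀ j, ∀ x ∈ Ioi 0, V j x = c j * psi x) ∧ ∑ j, c j = 0 := by
  obtain ⟨hW2, -, hKirchhoff⟩ := hV
  have hsol : ∀ j, ∃ c : ℂ, ∀ x ∈ Ioi 0, V j x = c * psi x := fun j => by
    obtain ⟨⟨⟨-, hdiff, hL2, hL2'⟩, -, hdiff', -⟩, -⟩ := hW2 j
    refine exists_eq_const_mul_psi_of_ode hdiff hdiff' hL2 hL2' fun x hx => ?_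
    have h := hT j x hx
    simp only [Tlin, pot] at h
    split_ifs at h <;> push_cast at h <;> linear_combination -h
  choose c hc using hsol
  refine ⟨c, hc, ?_⟩
  cases N with
  | zero => simp
  | succ n =>
    have h := hKirchhoff 0
    simp only [Complex.ofReal_zero, zero_mul] at h
    rw [← h]
    exact Finset.sum_congr rfl fun j _ => (deriv_zero_eq_of_forall_Ioi_eq (hW2 j).1.2.1 (hc j)).symm

lemma domDelta_const_mul_psi {N : ℕ} (c : Fin N → ℂ) (hc : ∑ j, c j = 0) :
    domDelta N 0 (fun j x => c j * psi x) := by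
  refine ⟨fun j => memW2_const_mul_psi (c j), fun j j' => by simp [psi], fun j => ?_⟩
  simp only [deriv_const_mul_psi, deriv_psi_zero, Complex.ofReal_one, mul_one, hc,
    Complex.ofReal_zero, zero_mul]

open Finset in
lemma sum_ite_val_lt {M : Type*} [AddCommMonoid M] {N k : ℕ} (hk : k ≤ N) (a b : M) :
    ∑ j : Fin N, (if (j : ℕ) < k then a else b) = k • a + (N - k) • b := by
  have hlt : #{j : Fin N | (j : ℕ) < k} = k := by
    rw [Fin.card_filter_val_lt, min_eq_right hk]
  have hge : #{j : Fin N | ¬(j : ℕ) < k} = N - k := by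
    rw [Finset.filter_not, Finset.card_sdiff_of_subset (Finset.filter_subset _ _), hlt,
      Finset.card_univ, Fintype.card_fin]
  rw [Finset.sum_ite, Finset.sum_const, Finset.sum_const, hlt, hge]

def tildeCoeff (N k : ℕ) (j : Fin N) : ℝ := if (j : ℕ) < k then -(((N : ℝ) - k) / k) else 1

lemma ofReal_tildePhi (N k : ℕ) (j : Fin N) (x : ℝ) :
    (tildePhi N k j x : ℂ) = tildeCoeff N k j * psi x := by
  unfold tildePhi tildeCoeff psi
  split_ifs <;> push_cast <;> ring

lemma sum_tildeCoeff {N k : ℕ} (hk : k ≠ 0) (hkN : k ≤ N) : ∑ j, (tildeCoeff N k j : ℂ) = 0 := by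
  simp only [tildeCoeff, apply_ite (fun r : ℝ => (r : ℂ)), sum_ite_val_lt hkN, nsmul_eq_mul]
  push_cast [Nat.cast_sub hkN]
  field_simp
  ring

lemma tildeCoeff_eq_of_same_block {N k : ℕ} {j j' : Fin N}
    (h : ((j : ℕ) < k ∧ (j' : ℕ) < k) ∨ (k ≤ (j : ℕ) ∧ k ≤ (j' : ℕ))) :
    tildeCoeff N k j = tildeCoeff N k j' := by
  rcases h with ⟨h, h'⟩ | ⟨h, h'⟩ <;> simp [tildeCoeff, h, h', not_lt.2]

lemma eq_mul_tildeCoeff {N k : ℕ} {c : Fin N → ℂ} (hk : k ≠ 0) (hkN : k < N)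
    (hc : ∀ j j' : Fin N, ((j : ℕ) < k ∧ (j' : ℕ) < k) ∨ (k ≤ (j : ℕ) ∧ k ≤ (j' : ℕ)) → c j = c j')
    (hsum : ∑ j, c j = 0) (j : Fin N) : c j = c ⟨k, hkN⟩ * tildeCoeff N k j := by
  set a := c ⟨0, by omega⟩
  set b := c ⟨k, hkN⟩
  have hblock : ∀ j : Fin N, c j = if (j : ℕ) < k then a else b := fun j => by
    split_ifs with h
    · exact hc _ _ (Or.inl ⟨h, Nat.pos_of_ne_zero hk⟩)
    · exact hc _ _ (Or.inr ⟨not_lt.1 h, le_rfl⟩)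
  rw [Finset.sum_congr rfl fun j _ => hblock j, sum_ite_val_lt hkN.le, nsmul_eq_mul,
    nsmul_eq_mul, Nat.cast_sub hkN.le] at hsum
  have hk' : (k : ℂ) ≠ 0 := Nat.cast_ne_zero.2 hk
  rw [hblock j, tildeCoeff]
  split_ifs
  · push_cast
    field_simp
    linear_combination hsum
  · simp

end StarGraphKernel

open StarGraphKernel in
theorem T01_kernel_symmetric_general (N k : ℕ) (hk1 : 1 ≤ k) (hk2 : k ≤ (N - 1) / 2) :
    (domDelta N 0 (fun j x => (tildePhi N k j x : ℂ)) ∧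
      memL2k N k (fun j x => (tildePhi N k j x : ℂ)) ∧
      (∀ j : Fin N, ∀ x ∈ Set.Ioi (0:ℝ),
        Tlin N 0 0 3 (fun j x => (tildePhi N k j x : ℂ)) j x = 0)) ∧
    (∀ V : Fin N → ℝ → ℂ, domDelta N 0 V → memL2k N k V →
      (∀ j : Fin N, ∀ x ∈ Set.Ioi (0:ℝ), Tlin N 0 0 3 V j x = 0) →
      ∃ c : ℂ, ∀ j : Fin N, ∀ x ∈ Set.Ioi (0:ℝ), V j x = c * (tildePhi N k j x : ℂ)) := by
  have hk : k ≠ 0 := by omega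
  have hkN : k < N := by omega
  simp only [ofReal_tildePhi]
  refine ⟨⟨domDelta_const_mul_psi _ (sum_tildeCoeff hk hkN.le), fun j j' h => ?_,
    fun j x _ => Tlin_const_mul_psi_eq_zero N 0 _ j x⟩, fun V hV hVk hT => ?_⟩
  · dsimp only
    rw [tildeCoeff_eq_of_same_block h]
  obtain ⟨c, hc, hsum⟩ := exists_coeff_of_Tlin_eq_zero hV hT
  have hblock := fun j j' h => eq_of_ae_eq_of_forall_Ioi_eq (hVk j j' h) (hc j) (hc j')
  refine ⟨c ⟨k, hkN⟩, fun j x hx => ?_⟩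
  rw [hc j x hx, eq_mul_tildeCoeff hk hkN hblock hsum j, mul_assoc]

/-- the kernel of `T⁰₁` restricted to `L²_k(𝒢)` is the span of `Φ̃_{0,k}`. -/
theorem T01_kernel_symmetric (N k : ℕ) (hN : 3 ≤ N) (hk1 : 1 ≤ k) (hk2 : k ≤ (N - 1) / 2) :
    (domDelta N 0 (fun j x => (tildePhi N k j x : ℂ)) ∧
      memL2k N k (fun j x => (tildePhi N k j x : ℂ)) ∧
      (∀ j : Fin N, ∀ x ∈ Set.Ioi (0:ℝ),
        Tlin N 0 0 3 (fun j x => (tildePhi N k j x : ℂ)) j x = 0)) ∧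
    (∀ V : Fin N → ℝ → ℂ, domDelta N 0 V → memL2k N k V →
      (∀ j : Fin N, ∀ x ∈ Set.Ioi (0:ℝ), Tlin N 0 0 3 V j x = 0) →
      ∃ c : ℂ, ∀ j : Fin N, ∀ x ∈ Set.Ioi (0:ℝ), V j x = c * (tildePhi N k j x : ℂ)) :=
  T01_kernel_symmetric_general N k hk1 hk2
end
end

section
/- Nonnegativity of the restricted operator T_{0,k} (appendix claim, α < 0): Let N ≥ 3 be an integer, α < 0 and k ∈ {1,…,⌊(N−1)/2⌋}; set a_k = α/(2k−N) > 0. Let V = (v_1,…,v_N) ∈ W²(G) be real-valued with v₁(0) = … = v_N(0) = 0, ∑_{j=1}^N v_j'(0) = 0, and v_j(a_k) = 0 for j = 1,…,k. Then ∑_{j=1}^{k} ∫₀^∞ ( (v_j')² + ((x−a_k)²−3) v_j² ) dx + ∑_{j=k+1}^{N} ∫₀^∞ ( (v_j')² + ((x+a_k)²−3) v_j² ) dx ≥ 0. -/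
open MeasureTheory Set Filter

noncomputable section

def MemL2r (f : ℝ → ℝ) : Prop := MeasureTheory.MemLp f 2 mu

def MemH1r (f : ℝ → ℝ) : Prop :=
  ContinuousOn f (Set.Ici (0:ℝ)) ∧ (∀ x ∈ Set.Ioi (0:ℝ), DifferentiableAt ℝ f x) ∧
    MemL2r f ∧ MemL2r (deriv f)

def MemH2r (f : ℝ → ℝ) : Prop :=
  MemH1r f ∧ ContinuousOn (deriv f) (Set.Ici (0:ℝ)) ∧
    (∀ x ∈ Set.Ioi (0:ℝ), DifferentiableAt ℝ (deriv f) x) ∧ MemL2r (deriv (deriv f))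

def MemW2r (f : ℝ → ℝ) : Prop := MemH2r f ∧ MemL2r (fun x => x^2 * f x)

def domDeltaR (N : ℕ) (α : ℝ) (P : Fin N → ℝ → ℝ) : Prop :=
  (∀ j, MemW2r (P j)) ∧ (∀ j j', P j 0 = P j' 0) ∧
    (∀ j₀, (∑ j, deriv (P j) 0) = α * P j₀ 0)

def TlinR (N k : ℕ) (α c : ℝ) (P : Fin N → ℝ → ℝ) (j : Fin N) (x : ℝ) : ℝ :=
  -(deriv (deriv (P j)) x) + pot N k α c j x * P j x

/-! On either side of `c`, `(x - c) e^{-(x-c)²/2}` is a ground state of `-d²/dx² + (x - c)²`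
with eigenvalue `3`. With `g` its logarithmic derivative,
`v'² + ((x-c)² - 3) v² = (v' - g v)² + (g v²)'`, so the energy of `v` on an interval having `c` as
an endpoint is at least the boundary term `[g v²]`. That term vanishes at `c` when `v (c) = 0`
(since `g ~ 1/(x - c)` and `v = O(x - c)`), at a point where `v` vanishes, and at infinity for
`v ∈ W²`. On the first `k` edges we split `(0, ∞)` at `a_k`, using both Dirichlet conditions; on
the others `(x + a_k)² ≥ x²` reduces to the case `c = 0`. -/

open intervalIntegral Topology

def groundLogDeriv (c x : ℝ) : ℝ := (x - c)⁻¹ - (x - c)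

def energyDensity (c : ℝ) (v w : ℝ → ℝ) (x : ℝ) : ℝ := w x ^ 2 + ((x - c) ^ 2 - 3) * v x ^ 2

section GroundState

variable {v w : ℝ → ℝ} {c : ℝ}

theorem hasDerivAt_groundLogDeriv_mul_sq {x : ℝ} (hx : x ≠ c) (hd : HasDerivAt v (w x) x) :
    HasDerivAt (fun y => groundLogDeriv c y * v y ^ 2)
      (energyDensity c v w x - (w x - groundLogDeriv c x * v x) ^ 2) x := by
  have hxc : x - c ≠ 0 := sub_ne_zero.2 hx
  have hg : HasDerivAt (fun y => (y - c)⁻¹ - (y - c)) (-1 / (x - c) ^ 2 - 1) x :=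
    (((hasDerivAt_id x).sub_const c).fun_inv hxc).fun_sub ((hasDerivAt_id x).sub_const c)
  refine (hg.fun_mul (hd.fun_pow 2)).congr_deriv ?_
  simp only [energyDensity, groundLogDeriv]
  field_simp
  ring

theorem tendsto_groundLogDeriv_mul_sq {s : Set ℝ} {d : ℝ} (hvc : v c = 0)
    (hd : HasDerivWithinAt v d s c) :
    Tendsto (fun x => groundLogDeriv c x * v x ^ 2) (𝓝[s \ {c}] c) (𝓝 0) := by
  have hslope := hasDerivWithinAt_iff_tendsto_slope.mp hd
  have hv : Tendsto v (𝓝[s \ {c}] c) (𝓝 0) :=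
    hvc ▸ (hd.continuousWithinAt.mono sdiff_subset).tendsto
  have hpoly : Tendsto (fun x => 1 - (x - c) ^ 2) (𝓝[s \ {c}] c) (𝓝 1) := by
    have h : Continuous fun x : ℝ => 1 - (x - c) ^ 2 := by fun_prop
    simpa using (h.tendsto c).mono_left nhdsWithin_le_nhds
  have hlim := (hpoly.mul hslope).mul hv
  rw [one_mul, mul_zero] at hlim
  refine hlim.congr' (eventually_nhdsWithin_of_forall fun x hx => ?_)
  have hxc : x - c ≠ 0 := sub_ne_zero.2 hx.2
  simp only [slope_def_field, hvc, groundLogDeriv]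
  field_simp
  ring

theorem sub_le_integral_energyDensity {s t : ℝ} (hst : s ≤ t) (hc : c = s ∨ c = t)
    (hvc : v c = 0) (hd : ∀ x ∈ Icc s t, HasDerivWithinAt v (w x) (Icc s t) x)
    (hT : IntegrableOn (energyDensity c v w) (Icc s t)) :
    groundLogDeriv c t * v t ^ 2 - groundLogDeriv c s * v s ^ 2 ≤
      ∫ x in s..t, energyDensity c v w x := by
  have hne : ∀ x ∈ Ioo s t, x ≠ c := by
    rintro x ⟨hsx, hxt⟩ rfl
    rcases hc with rfl | rfl <;> exact lt_irrefl _ ‹_›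
  have hcont : ContinuousOn (fun x => groundLogDeriv c x * v x ^ 2) (Icc s t) := by
    intro x hx
    by_cases hxc : x = c
    · subst hxc
      rw [← continuousWithinAt_sdiff_singleton, ContinuousWithinAt, hvc]
      simpa using tendsto_groundLogDeriv_mul_sq hvc (hd x hx)
    · have hg : ContinuousAt (groundLogDeriv c) x := by
        have : x - c ≠ 0 := sub_ne_zero.2 hxc
        unfold groundLogDeriv
        fun_prop (disch := assumption)
      exact hg.continuousWithinAt.mul ((hd x hx).continuousWithinAt.pow 2)
  refine sub_le_integral_of_hasDeriv_right_of_le hst hcont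
    (g' := fun x => energyDensity c v w x - (w x - groundLogDeriv c x * v x) ^ 2)
    (fun x hx => ?_) hT
    (fun x _ => sub_le_self _ (sq_nonneg _))
  have hdx := (hd x (Ioo_subset_Icc_self hx)).hasDerivAt (Icc_mem_nhds hx.1 hx.2)
  exact (hasDerivAt_groundLogDeriv_mul_sq (hne x hx) hdx).hasDerivWithinAt

theorem integral_Ioi_energyDensity_nonneg (hvc : v c = 0)
    (hd : ∀ x ∈ Ici c, HasDerivWithinAt v (w x) (Ici c) x)
    (hT : IntegrableOn (energyDensity c v w) (Ioi c))
    (hlim : Tendsto (fun x => groundLogDeriv c x * v x ^ 2) atTop (𝓝 0)) :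
    0 ≤ ∫ x in Ioi c, energyDensity c v w x := by
  have hTc : IntegrableOn (energyDensity c v w) (Ici c) :=
    (integrableOn_Ici_iff_integrableOn_Ioi).mpr hT
  have hbound : ∀ R ≥ c, groundLogDeriv c R * v R ^ 2 ≤ ∫ x in c..R, energyDensity c v w x :=
    fun R hR => by
      simpa [hvc] using sub_le_integral_energyDensity hR (Or.inl rfl) hvc
        (fun x hx => (hd x hx.1).mono Icc_subset_Ici_self) (hTc.mono_set Icc_subset_Ici_self)
  exact le_of_tendsto_of_tendsto hlim (intervalIntegral_tendsto_integral_Ioi c hT tendsto_id)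
    ((eventually_ge_atTop c).mono hbound)

end GroundState

section WeightedL2

variable {μ : Measure ℝ} {v w : ℝ → ℝ}

theorem MemLp.id_mul {p : ENNReal} (hv : MemLp v p μ) (hv₂ : MemLp (fun x => x ^ 2 * v x) p μ) :
    MemLp (fun x => x * v x) p μ := by
  refine (hv.add hv₂).mono (continuous_id.aestronglyMeasurable.mul hv.1) (ae_of_all _ fun x => ?_)
  rw [Pi.add_apply, show v x + x ^ 2 * v x = (1 + x ^ 2) * v x by ring, norm_mul, norm_mul]
  gcongr
  rw [Real.norm_eq_abs, Real.norm_eq_abs, abs_of_pos (by positivity : (0:ℝ) < 1 + x ^ 2)]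
  nlinarith [abs_nonneg x, sq_abs x]

theorem integrable_energyDensity (c : ℝ) (hv : MemLp v 2 μ) (hw : MemLp w 2 μ)
    (hxv : MemLp (fun x => x * v x) 2 μ) : Integrable (energyDensity c v w) μ := by
  have hcv : MemLp (fun x => (x - c) * v x) 2 μ := by
    convert hxv.sub (hv.const_mul c) using 1
    ext x
    simp [sub_mul]
  refine ((hw.integrable_sq.add hcv.integrable_sq).sub (hv.integrable_sq.const_mul 3)).congr
    (ae_of_all _ fun x => ?_)
  simp only [energyDensity, Pi.add_apply, Pi.sub_apply]
  ring

theorem tendsto_groundLogDeriv_mul_sq_atTop {b : ℝ} (c : ℝ)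
    (hd : ∀ x ∈ Ioi b, HasDerivAt v (w x) x) (hv : MemLp v 2 (volume.restrict (Ioi b)))
    (hw : MemLp w 2 (volume.restrict (Ioi b)))
    (hxv : MemLp (fun x => x * v x) 2 (volume.restrict (Ioi b))) :
    Tendsto (fun x => groundLogDeriv c x * v x ^ 2) atTop (𝓝 0) := by
  have hsq : Tendsto (fun x => v x ^ 2) atTop (𝓝 0) := by
    refine tendsto_zero_of_hasDerivAt_of_integrableOn_Ioi (a := b)
      (f' := fun x => 2 * (v x * w x)) (fun x hx => ?_) ((hv.integrable_mul hw).const_mul 2)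
      hv.integrable_sq
    exact ((hd x hx).fun_pow 2).congr_deriv (by ring)
  have hxsq : Tendsto (fun x => x * v x ^ 2) atTop (𝓝 0) := by
    refine tendsto_zero_of_hasDerivAt_of_integrableOn_Ioi (a := b)
      (f' := fun x => v x ^ 2 + 2 * (x * v x * w x)) (fun x hx => ?_)
      (by exact hv.integrable_sq.add ((hxv.integrable_mul hw).const_mul 2)) ?_
    · exact ((hasDerivAt_id' x).fun_mul ((hd x hx).fun_pow 2)).congr_deriv (by ring)
    · refine (hxv.integrable_mul hv).congr (ae_of_all _ fun x => ?_)
      simp only [Pi.mul_apply]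
      ring
  have hinv : Tendsto (fun x : ℝ => (x - c)⁻¹) atTop (𝓝 0) :=
    tendsto_inv_atTop_zero.comp (tendsto_atTop_add_const_right _ (-c) tendsto_id)
  have hlim := (hinv.mul hsq).sub (hxsq.sub (hsq.const_mul c))
  simp only [mul_zero, sub_zero] at hlim
  refine hlim.congr fun x => ?_
  simp only [groundLogDeriv]
  ring

end WeightedL2

section Edge

variable {f : ℝ → ℝ}

theorem MemH2r.hasDerivWithinAt {x : ℝ} (hf : MemH2r f) (hx : 0 ≤ x) :
    HasDerivWithinAt f (deriv f x) (Ici 0) x := by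
  obtain ⟨⟨hfc, hdiff, -, -⟩, hdc, -, -⟩ := hf
  rcases hx.eq_or_lt with rfl | hx
  · exact hasDerivWithinAt_Ici_of_tendsto_deriv (fun y hy => (hdiff y hy).differentiableWithinAt)
      ((hfc 0 self_mem_Ici).mono Ioi_subset_Ici_self) self_mem_nhdsWithin
      ((hdc 0 self_mem_Ici).mono Ioi_subset_Ici_self).tendsto
  · exact (hdiff x hx).hasDerivAt.hasDerivWithinAt

theorem MemW2r.integrableOn_energyDensity (hf : MemW2r f) (c : ℝ) :
    IntegrableOn (energyDensity c f (deriv f)) (Ioi 0) := by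
  obtain ⟨⟨⟨-, -, hv, hw⟩, -⟩, hx2v⟩ := hf
  exact integrable_energyDensity c hv hw (MemLp.id_mul hv hx2v)

theorem MemW2r.tendsto_groundLogDeriv_mul_sq_atTop (hf : MemW2r f) (c : ℝ) :
    Tendsto (fun x => groundLogDeriv c x * f x ^ 2) atTop (𝓝 0) := by
  obtain ⟨⟨⟨-, hdiff, hv, hw⟩, -⟩, hx2v⟩ := hf
  exact _root_.tendsto_groundLogDeriv_mul_sq_atTop c (fun x hx => (hdiff x hx).hasDerivAt)
    hv hw (MemLp.id_mul hv hx2v)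

theorem MemW2r.integral_energyDensity_nonneg {a : ℝ} (hf : MemW2r f) (h0 : f 0 = 0)
    (ha : 0 ≤ a) (hfa : f a = 0) : 0 ≤ ∫ x in Ioi 0, energyDensity a f (deriv f) x := by
  have hT := hf.integrableOn_energyDensity a
  have hd : ∀ x ∈ Ici 0, HasDerivWithinAt f (deriv f x) (Ici 0) x := fun x => hf.1.hasDerivWithinAt
  have hleft : 0 ≤ ∫ x in 0..a, energyDensity a f (deriv f) x := by
    simpa [h0, hfa] using sub_le_integral_energyDensity ha (Or.inr rfl) hfa
      (fun x hx => (hd x hx.1).mono Icc_subset_Ici_self)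
      (((integrableOn_Ici_iff_integrableOn_Ioi).mpr hT).mono_set Icc_subset_Ici_self)
  have hright : 0 ≤ ∫ x in Ioi a, energyDensity a f (deriv f) x :=
    integral_Ioi_energyDensity_nonneg hfa
      (fun x hx => (hd x (ha.trans hx)).mono (Ici_subset_Ici.2 ha))
      (hT.mono_set (Ioi_subset_Ioi ha)) (hf.tendsto_groundLogDeriv_mul_sq_atTop a)
  rw [← integral_interval_add_Ioi hT (hT.mono_set (Ioi_subset_Ioi ha))]
  exact add_nonneg hleft hright

theorem MemW2r.integral_energyDensity_nonneg_of_nonpos {c : ℝ} (hf : MemW2r f) (h0 : f 0 = 0)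
    (hc : c ≤ 0) : 0 ≤ ∫ x in Ioi 0, energyDensity c f (deriv f) x := by
  refine (hf.integral_energyDensity_nonneg h0 le_rfl h0).trans (setIntegral_mono_on
    (hf.integrableOn_energyDensity 0) (hf.integrableOn_energyDensity c) measurableSet_Ioi
    fun x (hx : 0 < x) => ?_)
  simp only [energyDensity]
  gcongr

end Edge

theorem T0k_nonneg_general
    (N k : ℕ) (α : ℝ) (hα : α < 0) (hk2 : k ≤ (N - 1) / 2)
    (V : Fin N → ℝ → ℝ) (hW2 : ∀ j, MemW2r (V j))
    (h0 : ∀ j, V j 0 = 0)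
    (hak : ∀ j : Fin N, (j : ℕ) < k → V j (α / (2*(k:ℝ) - (N:ℝ))) = 0) :
    0 ≤ ∑ j, ∫ x in Set.Ioi (0:ℝ),
      ((deriv (V j) x)^2 +
        ((if (j : ℕ) < k then (x - α / (2*(k:ℝ) - (N:ℝ)))^2
          else (x + α / (2*(k:ℝ) - (N:ℝ)))^2) - 3) * (V j x)^2) := by
  have h2k : 2 * (k : ℝ) - N ≤ 0 := by
    have : 2 * k ≤ N := by omega
    rw [sub_nonpos]
    exact_mod_cast this
  have ha : 0 ≤ α / (2 * (k : ℝ) - N) := div_nonneg_of_nonpos hα.le h2k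
  refine Finset.sum_nonneg fun j _ => ?_
  split_ifs with hj
  · exact (hW2 j).integral_energyDensity_nonneg (h0 j) ha (hak j hj)
  · simpa [energyDensity] using
      (hW2 j).integral_energyDensity_nonneg_of_nonpos (h0 j) (neg_nonpos.2 ha)

/-- nonnegativity of the restricted operator `T_{0,k}` for `α < 0`: the quadratic
form of `T^α_{1,k}` is nonnegative on real-valued `V ∈ W²(𝒢)` vanishing at the vertex and at
`a_k = α/(2k−N)` on the first `k` edges, with Kirchhoff flux condition. -/
theorem T0k_nonneg
    (N k : ℕ) (hN : 3 ≤ N) (α : ℝ) (hα : α < 0) (hk1 : 1 ≤ k) (hk2 : k ≤ (N - 1) / 2)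
    (V : Fin N → ℝ → ℝ) (hW2 : ∀ j, MemW2r (V j))
    (h0 : ∀ j, V j 0 = 0)
    (hflux : (∑ j, deriv (V j) 0) = 0)
    (hak : ∀ j : Fin N, (j : ℕ) < k → V j (α / (2*(k:ℝ) - (N:ℝ))) = 0) :
    0 ≤ ∑ j, ∫ x in Set.Ioi (0:ℝ),
      ((deriv (V j) x)^2 +
        ((if (j : ℕ) < k then (x - α / (2*(k:ℝ) - (N:ℝ)))^2
          else (x + α / (2*(k:ℝ) - (N:ℝ)))^2) - 3) * (V j x)^2) :=
  T0k_nonneg_general N k α hα hk2 V hW2 h0 hak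
end
end

section
/- Uniqueness of L² solutions of the shifted Hermite equation with eigenvalue 3: Let a ∈ ℝ and let v : (0,∞) → ℂ be twice continuously differentiable with v ∈ L²(0,∞) and −v''(x) + ((x−a)² − 3)v(x) = 0 for all x > 0. Then there is a constant c ∈ ℂ such that v(x) = c (a−x) e^{−(x−a)²/2} for all x > 0; that is, v is a scalar multiple of the derivative of x ↦ e^{−(x−a)²/2}. -/
/-!
After the shift `w(y) = v(y + a)` the substitution `ψ = w e^{y²/2}` turns the equation into
Hermite's equation `ψ'' = 2yψ' - 2ψ`, which has the solution `ψ = y`. The Wronskian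
`Q = yψ' - ψ` of `ψ` with it satisfies `Q' = 2yQ`, so `Q = K e^{y²}`.

If `K = 0`, then `ψ'' = 2Q = 0`, so `ψ'` is a constant `B` and `ψ = yψ' = By`: `v` is a multiple of
`(x - a) e^{-(x-a)²/2}`.

If `K ≠ 0`, then `(ψ/y)' = K e^{y²}/y²` for `y > 0`. Comparing with `F = e^{y²}/(2y³)`, whose
derivative is at most `e^{y²}/y²`, gives `|ψ/y| ≥ |K| F - C`, hence
`|w| = |ψ/y| · y e^{-y²/2} ≥ |K| e^{y²/2}/(2y²) - |C| → ∞`, incompatible with `v ∈ L²(0,∞)`.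
-/
open MeasureTheory Set Filter

noncomputable section

open scoped ENNReal

theorem exists_const_of_hasDerivAt_zero {E : Type*} [NormedAddCommGroup E] [NormedSpace ℝ E]
    {f : ℝ → E} {s : Set ℝ} (hs : IsOpen s) (hs' : IsPreconnected s)
    (hf : ∀ x ∈ s, HasDerivAt f 0 x) : ∃ B, ∀ x ∈ s, f x = B :=
  hs.exists_is_const_of_deriv_eq_zero hs'
    (fun x hx => (hf x hx).differentiableAt.differentiableWithinAt) fun x hx => (hf x hx).deriv

theorem exists_eq_mul_exp_of_hasDerivAt {f : ℝ → ℂ} {g g' : ℝ → ℝ} {s : Set ℝ}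
    (hs : IsOpen s) (hs' : IsPreconnected s) (hg : ∀ x ∈ s, HasDerivAt g (g' x) x)
    (hf : ∀ x ∈ s, HasDerivAt f (g' x * f x) x) :
    ∃ K : ℂ, ∀ x ∈ s, f x = K * Real.exp (g x) := by
  obtain ⟨K, hK⟩ := exists_const_of_hasDerivAt_zero (f := fun y => f y * Real.exp (-g y)) hs hs'
    fun x hx => ((hf x hx).fun_mul (hg x hx).fun_neg.exp.ofReal_comp).congr_deriv (by
      push_cast; ring)
  refine ⟨K, fun x hx => ?_⟩
  rw [← hK x hx, mul_assoc, ← Complex.ofReal_mul, ← Real.exp_add, neg_add_cancel, Real.exp_zero,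
    Complex.ofReal_one, mul_one]

theorem HasDerivAt.re_comp {f : ℝ → ℂ} {f' : ℂ} {x : ℝ} (h : HasDerivAt f f' x) :
    HasDerivAt (fun y => (f y).re) f'.re x :=
  Complex.reCLM.hasFDerivAt.comp_hasDerivAt x h

theorem HasDerivAt.mul_exp_sq_half {w : ℝ → ℂ} {w' : ℂ} {x : ℝ} (hw : HasDerivAt w w' x) :
    HasDerivAt (fun y => w y * Real.exp (y ^ 2 / 2)) ((w' + x * w x) * Real.exp (x ^ 2 / 2)) x := by
  have hE : HasDerivAt (fun y : ℝ => y ^ 2 / 2) x x := by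
    simpa using (hasDerivAt_pow 2 x).div_const 2
  refine (hw.fun_mul hE.exp.ofReal_comp).congr_deriv ?_
  push_cast
  ring

theorem hasDerivAt_exp_sq_div_two_mul_cube {x : ℝ} (hx : x ≠ 0) :
    HasDerivAt (fun y => Real.exp (y ^ 2) / (2 * y ^ 3))
      (Real.exp (x ^ 2) / x ^ 2 - 3 * Real.exp (x ^ 2) / (2 * x ^ 4)) x := by
  have hsq : HasDerivAt (fun y : ℝ => y ^ 2) (2 * x) x := by
    simpa using hasDerivAt_pow 2 x
  have hcube : HasDerivAt (fun y : ℝ => 2 * y ^ 3) (2 * (3 * x ^ 2)) x := by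
    simpa using (hasDerivAt_pow 3 x).const_mul 2
  refine (hsq.exp.div hcube (by positivity)).congr_deriv ?_
  field_simp

theorem mul_exp_neg_sq_half_le_one (x : ℝ) : x * Real.exp (-x ^ 2 / 2) ≤ 1 := by
  rw [neg_div, Real.exp_neg, ← div_eq_mul_inv, div_le_one (Real.exp_pos _)]
  nlinarith [Real.add_one_le_exp (x ^ 2 / 2)]

theorem tendsto_exp_sq_half_div_sq :
    Tendsto (fun x : ℝ => Real.exp (x ^ 2 / 2) / x ^ 2) atTop atTop := by
  have ht : Tendsto (fun x : ℝ => x ^ 2 / 2) atTop atTop :=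
    (tendsto_pow_atTop two_ne_zero).atTop_div_const two_pos
  have := ((Real.tendsto_exp_div_pow_atTop 1).comp ht).atTop_div_const two_pos
  refine this.congr fun x => ?_
  simp only [Function.comp, pow_one]
  field_simp

theorem monotoneOn_re_div_sub_of_hasDerivAt {φ : ℝ → ℂ} {K : ℂ} {b : ℝ} (hK : K ≠ 0)
    (hb : 0 ≤ b) (hφ : ∀ x ∈ Ioi b, HasDerivAt φ (K * (Real.exp (x ^ 2) / x ^ 2 : ℝ)) x) :
    MonotoneOn (fun x => (φ x / K).re - Real.exp (x ^ 2) / (2 * x ^ 3)) (Ioi b) := by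
  have hderiv : ∀ x ∈ Ioi b, HasDerivAt (fun x => (φ x / K).re - Real.exp (x ^ 2) / (2 * x ^ 3))
      (3 * Real.exp (x ^ 2) / (2 * x ^ 4)) x := fun x hx =>
    (((hφ x hx).div_const K).re_comp.sub
      (hasDerivAt_exp_sq_div_two_mul_cube (hb.trans_lt hx).ne')).congr_deriv (by
        rw [mul_div_cancel_left₀ _ hK, Complex.ofReal_re]; ring)
  refine monotoneOn_of_hasDerivWithinAt_nonneg (convex_Ioi b)
    (f' := fun x => 3 * Real.exp (x ^ 2) / (2 * x ^ 4))
    (fun x hx => (hderiv x hx).continuousAt.continuousWithinAt) ?_ ?_ <;> rw [interior_Ioi]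
  · exact fun x hx => (hderiv x hx).hasDerivWithinAt
  · exact fun x _ => by positivity

theorem tendsto_norm_mul_of_hasDerivAt_eq_exp_sq_div_sq {φ : ℝ → ℂ} {K : ℂ} {b : ℝ}
    (hK : K ≠ 0) (hb : 0 ≤ b)
    (hφ : ∀ x ∈ Ioi b, HasDerivAt φ (K * (Real.exp (x ^ 2) / x ^ 2 : ℝ)) x) :
    Tendsto (fun x => ‖φ x‖ * (x * Real.exp (-x ^ 2 / 2))) atTop atTop := by
  set F : ℝ → ℝ := fun x => Real.exp (x ^ 2) / (2 * x ^ 3)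
  set C := (φ (b + 1) / K).re - F (b + 1)
  have hKpos : 0 < ‖K‖ := norm_pos_iff.2 hK
  have hlower : ∀ x ≥ b + 1,
      ‖K‖ * (Real.exp (x ^ 2 / 2) / x ^ 2 / 2 + -|C|) ≤ ‖φ x‖ * (x * Real.exp (-x ^ 2 / 2)) := by
    intro x hx
    have hx0 : 0 < x := by linarith
    have hC : C ≤ (φ x / K).re - F x :=
      monotoneOn_re_div_sub_of_hasDerivAt hK hb hφ (by simp) (by simp; linarith) hx
    have hre : (φ x / K).re ≤ ‖φ x‖ / ‖K‖ := norm_div (φ x) K ▸ Complex.re_le_norm _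
    have hFC : (F x + C) * ‖K‖ ≤ ‖φ x‖ := by rw [← le_div_iff₀ hKpos]; linarith
    set u := x * Real.exp (-x ^ 2 / 2)
    have hu0 : 0 ≤ u := by positivity
    have hCu : -|C| ≤ C * u := by
      nlinarith [neg_abs_le C,
        mul_le_mul_of_nonneg_left (mul_exp_neg_sq_half_le_one x) (abs_nonneg C)]
    have hFu : F x * u = Real.exp (x ^ 2 / 2) / x ^ 2 / 2 := by
      simp only [F, u]
      rw [show Real.exp (x ^ 2 / 2) = Real.exp (x ^ 2) * Real.exp (-x ^ 2 / 2) by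
        rw [← Real.exp_add]; ring_nf]
      field_simp
    calc ‖K‖ * (Real.exp (x ^ 2 / 2) / x ^ 2 / 2 + -|C|) ≤ ‖K‖ * ((F x + C) * u) := by
          rw [add_mul, hFu]; gcongr
      _ ≤ ‖φ x‖ * u := by nlinarith [mul_le_mul_of_nonneg_right hFC hu0]
  refine tendsto_atTop_mono' _ (eventually_atTop.2 ⟨b + 1, hlower⟩) ?_
  exact (tendsto_atTop_add_const_right _ _
    (tendsto_exp_sq_half_div_sq.atTop_div_const two_pos)).const_mul_atTop hKpos

theorem hermite_one_eq_or_tendsto {ψ ψ' : ℝ → ℂ} {c : ℝ}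
    (hψ : ∀ x ∈ Ioi c, HasDerivAt ψ (ψ' x) x)
    (hψ' : ∀ x ∈ Ioi c, HasDerivAt ψ' (2 * (x * ψ' x - ψ x)) x) :
    (∃ B : ℂ, ∀ x ∈ Ioi c, ψ x = B * x) ∨
      Tendsto (fun x => ‖ψ x‖ * Real.exp (-x ^ 2 / 2)) atTop atTop := by
  have hwronskian : ∀ x ∈ Ioi c,
      HasDerivAt (fun y => y * ψ' y - ψ y) ((2 * x : ℝ) * (x * ψ' x - ψ x)) x := fun x hx =>
    (((hasDerivAt_id' x).ofReal_comp.fun_mul (hψ' x hx)).fun_sub (hψ x hx)).congr_deriv (by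
      push_cast; ring)
  obtain ⟨K, hK⟩ := exists_eq_mul_exp_of_hasDerivAt isOpen_Ioi isPreconnected_Ioi
    (fun x _ => by simpa using hasDerivAt_pow 2 x) hwronskian
  rcases eq_or_ne K 0 with rfl | hK0
  · obtain ⟨B, hB⟩ := exists_const_of_hasDerivAt_zero isOpen_Ioi isPreconnected_Ioi
      fun x hx => (hψ' x hx).congr_deriv (by rw [hK x hx, zero_mul, mul_zero])
    refine .inl ⟨B, fun x hx => ?_⟩
    linear_combination (x : ℂ) * hB x hx - hK x hx
  · refine .inr ((tendsto_norm_mul_of_hasDerivAt_eq_exp_sq_div_sq (φ := fun x => ψ x / x) hK0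
      (le_max_right c 0) fun x hx => ?_).congr' ?_)
    · have hx0 : (x : ℂ) ≠ 0 := Complex.ofReal_ne_zero.2 (le_max_right c 0 |>.trans_lt hx).ne'
      have hxc : x ∈ Ioi c := le_max_left c 0 |>.trans_lt hx
      refine ((hψ x hxc).div (hasDerivAt_id' x).ofReal_comp hx0).congr_deriv ?_
      rw [Complex.ofReal_div, ← mul_div_assoc, ← hK x hxc]
      push_cast
      ring
    · filter_upwards [eventually_gt_atTop 0] with x hx
      rw [norm_div, Complex.norm_real, Real.norm_of_nonneg hx.le]
      field_simp

theorem oscillator_three_eq_or_tendsto {w w' : ℝ → ℂ} {c : ℝ}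
    (hw : ∀ x ∈ Ioi c, HasDerivAt w (w' x) x)
    (hw' : ∀ x ∈ Ioi c, HasDerivAt w' ((x ^ 2 - 3 : ℝ) * w x) x) :
    (∃ B : ℂ, ∀ x ∈ Ioi c, w x = B * (x * Real.exp (-x ^ 2 / 2) : ℝ)) ∨
      Tendsto (fun x => ‖w x‖) atTop atTop := by
  have hψ' : ∀ x ∈ Ioi c, HasDerivAt (fun y => (w' y + y * w y) * Real.exp (y ^ 2 / 2))
      (2 * (x * ((w' x + x * w x) * Real.exp (x ^ 2 / 2)) - w x * Real.exp (x ^ 2 / 2))) x :=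
    fun x hx => ((hw' x hx).fun_add ((hasDerivAt_id' x).ofReal_comp.fun_mul
      (hw x hx))).mul_exp_sq_half.congr_deriv (by push_cast; ring)
  have hexp (x : ℝ) : Real.exp (x ^ 2 / 2) * Real.exp (-x ^ 2 / 2) = 1 := by
    rw [← Real.exp_add, neg_div, add_neg_cancel, Real.exp_zero]
  refine (hermite_one_eq_or_tendsto (fun x hx => (hw x hx).mul_exp_sq_half) hψ').imp
    (fun ⟨B, hB⟩ => ⟨B, fun x hx => ?_⟩) fun h => h.congr fun x => ?_
  · rw [← mul_one (w x), ← Complex.ofReal_one, ← hexp x, Complex.ofReal_mul, ← mul_assoc, hB x hx]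
    push_cast
    ring
  · rw [norm_mul, Complex.norm_real, Real.norm_of_nonneg (Real.exp_pos _).le, mul_assoc, hexp,
      mul_one]

theorem not_memLp_restrict_Ioi_of_eventually_le_norm {E : Type*} [NormedAddCommGroup E]
    {f : ℝ → E} {p : ℝ≥0∞} {ε : ℝ} (c : ℝ) (hp0 : p ≠ 0) (hp : p ≠ ∞) (hε : 0 < ε)
    (hf : ∀ᶠ x in atTop, ε ≤ ‖f x‖) : ¬MemLp f p (volume.restrict (Ioi c)) := by
  intro hmem
  obtain ⟨X, hX⟩ := eventually_atTop.1 hf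
  set μ := volume.restrict (Ioi (max X c))
  have hμ : μ ≠ 0 := by simp [μ, Measure.restrict_eq_zero]
  have hconst : eLpNorm (fun _ => ε) p μ = ∞ := by
    rw [eLpNorm_const _ hp0 hμ]
    simp [μ, ENNReal.toReal_pos hp0 hp, ENNReal.mul_top, hε.ne']
  have hle : eLpNorm (fun _ => ε) p μ ≤ eLpNorm f p (volume.restrict (Ioi c)) := by
    refine (eLpNorm_mono_ae ((ae_restrict_iff' measurableSet_Ioi).2
      (ae_of_all _ fun x hx => ?_))).trans
      (eLpNorm_mono_measure f (Measure.restrict_mono (Ioi_subset_Ioi (le_max_right X c)) le_rfl))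
    rw [Real.norm_of_nonneg hε.le]
    exact hX x ((le_max_left X c).trans hx.le)
  exact (hle.trans_lt hmem.eLpNorm_lt_top).ne hconst

theorem hermite_halfline_eigenvalue_three_general (a : ℝ) (v : ℝ → ℂ)
    (h1 : ∀ x ∈ Set.Ioi (0:ℝ), DifferentiableAt ℝ v x)
    (h2 : ∀ x ∈ Set.Ioi (0:ℝ), DifferentiableAt ℝ (deriv v) x)
    (hL2 : MeasureTheory.MemLp v 2 mu)
    (heq : ∀ x ∈ Set.Ioi (0:ℝ),
      -(deriv (deriv v) x) + (((x - a)^2 - 3 : ℝ) : ℂ) * v x = 0) :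
    ∃ c : ℂ, ∀ x ∈ Set.Ioi (0:ℝ), v x = c * (((a - x) * Real.exp (-(x - a)^2/2) : ℝ) : ℂ) := by
  have hshift : ∀ y ∈ Ioi (-a), y + a ∈ Ioi (0 : ℝ) := fun y hy => by
    simp only [mem_Ioi] at hy ⊢; linarith
  have hw : ∀ y ∈ Ioi (-a), HasDerivAt (fun y => v (y + a)) (deriv v (y + a)) y :=
    fun y hy => (h1 _ (hshift y hy)).hasDerivAt.comp_add_const y a
  have hw' : ∀ y ∈ Ioi (-a),
      HasDerivAt (fun y => deriv v (y + a)) ((y ^ 2 - 3 : ℝ) * v (y + a)) y := fun y hy =>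
    ((h2 _ (hshift y hy)).hasDerivAt.comp_add_const y a).congr_deriv (by
      simpa [add_sub_cancel_right, neg_add_eq_zero] using heq _ (hshift y hy))
  rcases oscillator_three_eq_or_tendsto hw hw' with ⟨B, hB⟩ | hgrowth
  · refine ⟨-B, fun x hx => ?_⟩
    have hvx := hB (x - a) (by simpa using hx)
    rw [sub_add_cancel] at hvx
    rw [hvx]
    push_cast
    ring
  · have hv : Tendsto (fun x => ‖v x‖) atTop atTop :=
      (hgrowth.comp (tendsto_atTop_add_const_right _ (-a) tendsto_id)).congr fun x => by
        simp
    exact absurd hL2 (not_memLp_restrict_Ioi_of_eventually_le_norm 0 two_ne_zero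
      ENNReal.ofNat_ne_top one_pos (hv.eventually_ge_atTop 1))

/-- every `L²(0,∞)`, twice continuously differentiable solution of the shifted
Hermite equation `-v'' + ((x-a)² - 3) v = 0` on `(0,∞)` is a scalar multiple of the explicit
Gaussian-type solution. -/
theorem hermite_halfline_eigenvalue_three (a : ℝ) (v : ℝ → ℂ)
    (h1 : ∀ x ∈ Set.Ioi (0:ℝ), DifferentiableAt ℝ v x)
    (h2 : ∀ x ∈ Set.Ioi (0:ℝ), DifferentiableAt ℝ (deriv v) x)
    (h3 : ContinuousOn (deriv (deriv v)) (Set.Ioi (0:ℝ)))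
    (hL2 : MeasureTheory.MemLp v 2 mu)
    (heq : ∀ x ∈ Set.Ioi (0:ℝ),
      -(deriv (deriv v) x) + (((x - a)^2 - 3 : ℝ) : ℂ) * v x = 0) :
    ∃ c : ℂ, ∀ x ∈ Set.Ioi (0:ℝ), v x = c * (((a - x) * Real.exp (-(x - a)^2/2) : ℝ) : ℂ) :=
  hermite_halfline_eigenvalue_three_general a v h1 h2 hL2 heq
end
end

section
/- Embedding of the weighted Sobolev space into the logarithmic energy space: Let f ∈ H¹(0,∞) be such that x f(x) ∈ L²(0,∞). Then f ∈ L¹(0,∞) and the function x ↦ |f(x)|² log|f(x)|² (defined as 0 where f(x)=0) belongs to L¹(0,∞). In particular W¹(ℝ₊) ⊂ W(ℝ₊). -/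
/-!
Writing `f = (1 + |x|)⁻¹ · (1 + |x|) f` exhibits `f` as a product of two `L²(0,∞)` functions,
so `f ∈ L¹(0,∞)`. For `f ∈ H¹(0,∞)` both `|f|²` and its derivative `2 Re (f̄ f')` are integrable
on `(0,∞)`, so `|f|²` tends to `0` at infinity and `|f(x)|² = -∫ₓ^∞ 2 Re (f̄ f')` is bounded.
With `|f| ≤ C`, `C ≥ 1`, and `|s log s| < 1` on `(0, 1]`, one gets
`||f|² log |f|²| ≤ 2 |f| + 2 log C · |f|²`, which is integrable.
-/

open MeasureTheory Set Filter

noncomputable section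

lemma memLp_two_inv_one_add_abs : MemLp (fun x : ℝ => (1 + |x|)⁻¹) 2 volume := by
  refine (memLp_two_iff_integrable_sq_norm (by fun_prop)).2 ?_
  refine (integrable_one_add_norm (E := ℝ) (μ := volume) (r := 2) (by norm_num)).congr
    (Eventually.of_forall fun x => ?_)
  simp only [Real.norm_eq_abs, abs_inv, abs_of_pos (by positivity : (0:ℝ) < 1 + |x|), inv_pow]
  rw [Real.rpow_neg (by positivity), Real.rpow_two]

lemma integrable_of_memLp_two_of_memLp_two_mul_id {s : Set ℝ} {f : ℝ → ℂ}
    (hf : MemLp f 2 (volume.restrict s))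
    (hxf : MemLp (fun x : ℝ => (x : ℂ) * f x) 2 (volume.restrict s)) :
    Integrable f (volume.restrict s) := by
  have hprod := (memLp_two_inv_one_add_abs.restrict s).integrable_mul (hf.norm.add hxf.norm)
  refine hprod.mono' hf.1 (Eventually.of_forall fun x => le_of_eq ?_)
  simp only [Pi.mul_apply, Pi.add_apply, norm_mul, Complex.norm_real, Real.norm_eq_abs]
  field_simp

theorem norm_le_integral_norm_deriv_of_integrableOn_Ioi {E : Type*} [NormedAddCommGroup E]
    [NormedSpace ℝ E] [CompleteSpace E] {F F' : ℝ → E} {a x : ℝ}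
    (hderiv : ∀ t ∈ Ioi a, HasDerivAt F (F' t) t) (hF' : IntegrableOn F' (Ioi a))
    (hF : IntegrableOn F (Ioi a)) (hx : x ∈ Ioi a) :
    ‖F x‖ ≤ ∫ t in Ioi a, ‖F' t‖ := by
  have hsub : Ioi x ⊆ Ioi a := Ioi_subset_Ioi (le_of_lt hx)
  have hFTC : ∫ t in Ioi x, F' t = 0 - F x :=
    integral_Ioi_of_hasDerivAt_of_tendsto (hderiv x hx).continuousAt.continuousWithinAt
      (fun t ht => hderiv t (hsub ht)) (hF'.mono_set hsub)
      (tendsto_zero_of_hasDerivAt_of_integrableOn_Ioi hderiv hF' hF)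
  calc ‖F x‖ = ‖∫ t in Ioi x, F' t‖ := by rw [hFTC, zero_sub, norm_neg]
    _ ≤ ∫ t in Ioi x, ‖F' t‖ := norm_integral_le_integral_norm _
    _ ≤ ∫ t in Ioi a, ‖F' t‖ :=
      setIntegral_mono_set hF'.norm (Eventually.of_forall fun _ => norm_nonneg _)
        hsub.eventuallyLE

lemma MemH1.sq_norm_le {f : ℝ → ℂ} (hf : MemH1 f) {x : ℝ} (hx : x ∈ Ioi 0) :
    ‖f x‖ ^ 2 ≤ ∫ t in Ioi 0, ‖2 * inner ℝ (f t) (deriv f t)‖ := by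
  obtain ⟨-, hdiff, hfL2, hf'L2⟩ := hf
  have hderiv : ∀ t ∈ Ioi (0:ℝ),
      HasDerivAt (‖f ·‖ ^ 2) (2 * inner ℝ (f t) (deriv f t)) t :=
    fun t ht => (hdiff t ht).hasDerivAt.norm_sq
  have hF'int : Integrable (fun t => 2 * inner ℝ (f t) (deriv f t)) mu := by
    refine ((hfL2.norm.integrable_mul hf'L2.norm).const_mul 2).mono'
      ((hfL2.1.inner hf'L2.1).const_mul 2) (Eventually.of_forall fun t => ?_)
    simpa [norm_mul] using norm_inner_le_norm (𝕜 := ℝ) (f t) (deriv f t)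
  have hFint : Integrable (‖f ·‖ ^ 2) mu := hfL2.integrable_norm_pow two_ne_zero
  simpa [Real.norm_of_nonneg (sq_nonneg ‖f x‖)] using
    norm_le_integral_norm_deriv_of_integrableOn_Ioi hderiv hF'int hFint hx

lemma MemH1.exists_norm_le {f : ℝ → ℂ} (hf : MemH1 f) :
    ∃ C, ∀ x ∈ Ioi (0:ℝ), ‖f x‖ ≤ C :=
  ⟨_, fun _ hx => Real.le_sqrt_of_sq_le (hf.sq_norm_le hx)⟩

lemma abs_sq_mul_log_sq_le {s C : ℝ} (hC : 1 ≤ C) (hs : 0 ≤ s) (hsC : s ≤ C) :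
    |s ^ 2 * Real.log (s ^ 2)| ≤ 2 * s + 2 * Real.log C * s ^ 2 := by
  have hlogC : 0 ≤ Real.log C := Real.log_nonneg hC
  have hsplit : s ^ 2 * Real.log (s ^ 2) = 2 * s * (Real.log s * s) := by
    rw [Real.log_pow]; push_cast; ring
  rcases le_total s 1 with hs1 | hs1
  · rcases hs.eq_or_lt with rfl | hs0
    · simp
    have hsmall := Real.abs_log_mul_self_lt s hs0 hs1
    rw [hsplit, abs_mul, abs_of_nonneg (by positivity : 0 ≤ 2 * s)]
    nlinarith [sq_nonneg s]
  · have hlog : 0 ≤ Real.log s := Real.log_nonneg hs1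
    have hlogle : Real.log s ≤ Real.log C := Real.log_le_log (by linarith) hsC
    rw [hsplit, abs_of_nonneg (by positivity)]
    nlinarith [sq_nonneg s]

/-- `W¹(ℝ₊) ⊂ W(ℝ₊)`: any `f ∈ H¹(0,∞)` with `x f ∈ L²(0,∞)` is integrable and
`|f|² log |f|²` is integrable on `(0,∞)`. -/
theorem W1_subset_logEnergySpace (f : ℝ → ℂ) (h : MemW1 f) :
    MeasureTheory.Integrable f mu ∧
    MeasureTheory.Integrable (fun x => ‖f x‖^2 * Real.log (‖f x‖^2)) mu := by
  obtain ⟨hH1, hxf⟩ := h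
  have hfL2 : MemL2 f := hH1.2.2.1
  have hf_int : Integrable f mu := integrable_of_memLp_two_of_memLp_two_mul_id hfL2 hxf
  refine ⟨hf_int, ?_⟩
  obtain ⟨C, hC⟩ := hH1.exists_norm_le
  set D := max C 1
  have hdom : Integrable (fun x => 2 * ‖f x‖ + 2 * Real.log D * ‖f x‖ ^ 2) mu :=
    (hf_int.norm.const_mul 2).add ((hfL2.integrable_norm_pow two_ne_zero).const_mul _)
  have hmeas : AEStronglyMeasurable (fun x => ‖f x‖ ^ 2 * Real.log (‖f x‖ ^ 2)) mu := by
    have hsq : AEMeasurable (fun x => ‖f x‖ ^ 2) mu := hfL2.1.norm.aemeasurable.pow_const 2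
    exact (hsq.mul (Real.measurable_log.comp_aemeasurable hsq)).aestronglyMeasurable
  refine hdom.mono' hmeas ?_
  filter_upwards [ae_restrict_mem measurableSet_Ioi] with x hx
  exact abs_sq_mul_log_sq_le (le_max_right C 1) (norm_nonneg _)
    ((hC x hx).trans (le_max_left C 1))
end
end
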